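/- arXiv:0908.0171 — 8 statements merged into one kernel-verified Lean document; each statement's English description precedes it below -/
import Mathlib

section
/- The integral over θ from 0 to 1 of log|1 - e^{2πiθ}| · log|1 + e^{2πiθ}| equals -π²/24. -/
/-
For `|r| < 1` the Taylor series of `log (1 - z)` gives
`log ‖1 - r e(θ)‖ = -∑ rⁿ cos (2πnθ) / n`, uniformly in `θ`, so orthogonality of the cosines gives
`∫₀¹ log ‖1 - r e(θ)‖ · log ‖1 - s e(θ)‖ dθ = ∑ (rs)ⁿ / (2n²)`. Take `s = -r` and let `r → 1⁻`.
On the series side the limit is `∑ (-1)ⁿ / (2n²) = -π²/24`. On the integral side dominated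
convergence applies: by the parallelogram law one of `‖1 ± r e(θ)‖` is at least `1` (and both are
at most `2`), so the product of the two logarithms is bounded by the sum of their absolute values,
and `log ‖1 ∓ r e(θ)‖` is bounded by `|log ‖1 ∓ e(θ)‖| + log 2`, which is integrable.
-/

open Real Complex MeasureTheory Filter Set Topology

theorem integral_cos_two_pi_int_mul (m : ℤ) :
    ∫ θ in (0 : ℝ)..1, Real.cos (2 * π * m * θ) = if m = 0 then 1 else 0 := by
  split_ifs with hm
  · simp [hm]
  · have hc : 2 * π * m ≠ 0 := by positivity
    rw [intervalIntegral.integral_comp_mul_left (fun x => Real.cos x) hc]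
    have : Real.sin (2 * π * m) = 0 := by
      rw [show 2 * π * m = ((2 * m : ℤ) : ℝ) * π by push_cast; ring]
      exact Real.sin_int_mul_pi _
    simp [this]

theorem integral_cos_mul_cos {j k : ℕ} (hk : k ≠ 0) :
    ∫ θ in (0 : ℝ)..1, Real.cos (2 * π * j * θ) * Real.cos (2 * π * k * θ)
      = if j = k then 1 / 2 else 0 := by
  have h (θ : ℝ) : Real.cos (2 * π * j * θ) * Real.cos (2 * π * k * θ)
      = (Real.cos (2 * π * ((j - k : ℤ) : ℝ) * θ)
        + Real.cos (2 * π * ((j + k : ℤ) : ℝ) * θ)) / 2 := by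
    rw [show 2 * π * ((j - k : ℤ) : ℝ) * θ = 2 * π * j * θ - 2 * π * k * θ by push_cast; ring,
      show 2 * π * ((j + k : ℤ) : ℝ) * θ = 2 * π * j * θ + 2 * π * k * θ by push_cast; ring,
      ← Real.two_mul_cos_mul_cos]
    ring
  have hint (m : ℤ) : IntervalIntegrable (fun θ => Real.cos (2 * π * m * θ)) volume 0 1 :=
    (by fun_prop : Continuous fun θ : ℝ => Real.cos (2 * π * m * θ)).intervalIntegrable 0 1
  have hjk : (j : ℤ) + k ≠ 0 := by omega
  simp only [h, intervalIntegral.integral_div, intervalIntegral.integral_add (hint _) (hint _),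
    integral_cos_two_pi_int_mul, if_neg hjk, sub_eq_zero, Nat.cast_inj]
  split_ifs <;> norm_num

theorem norm_pow_div_mul_cos_le (r x : ℝ) (k : ℕ) : ‖r ^ k / k * Real.cos x‖ ≤ |r| ^ k := by
  rw [norm_mul, norm_div, norm_pow, Real.norm_eq_abs, Real.norm_natCast]
  calc |r| ^ k / k * ‖Real.cos x‖ ≤ |r| ^ k / k * 1 := by
        gcongr; exact Real.abs_cos_le_one x
    _ ≤ |r| ^ k := by
        rcases Nat.eq_zero_or_pos k with rfl | hk
        · simp
        · rw [mul_one]; exact div_le_self (by positivity) (by exact_mod_cast hk)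

theorem abs_log_mul_log_le_abs_log {x : ℝ} (h1 : 1 ≤ x) (h2 : x ≤ 2) (y : ℝ) :
    |Real.log x * Real.log y| ≤ |Real.log y| := by
  have hx0 := Real.log_nonneg h1
  have hx1 : Real.log x < 1 := (Real.log_le_log (by linarith) h2).trans_lt
    (Real.log_two_lt_d9.trans (by norm_num))
  rw [abs_mul, abs_of_nonneg hx0]
  exact mul_le_of_le_one_left (abs_nonneg _) hx1.le

theorem abs_log_le_abs_log_add_log_two {a t : ℝ} (ha : 0 < a) (h1 : a / 2 ≤ t) (h2 : t ≤ 2) :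
    |Real.log t| ≤ |Real.log a| + Real.log 2 := by
  have ht : 0 < t := by linarith
  have hlow : Real.log a - Real.log 2 ≤ Real.log t := by
    rw [← Real.log_div ha.ne' two_ne_zero]; exact Real.log_le_log (by positivity) h1
  have hup : Real.log t ≤ Real.log 2 := Real.log_le_log ht h2
  rw [abs_le]
  constructor <;> linarith [neg_abs_le (Real.log a), abs_nonneg (Real.log a)]

theorem norm_exp_two_pi_I_mul (θ : ℝ) : ‖Complex.exp (2 * π * I * θ)‖ = 1 := by
  rw [show 2 * π * I * θ = ((2 * π * θ : ℝ) : ℂ) * I by push_cast; ring]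
  exact Complex.norm_exp_ofReal_mul_I _

theorem re_ofReal_mul_exp_pow_div (r θ : ℝ) (n : ℕ) :
    ((r * Complex.exp (2 * π * I * θ)) ^ n / n).re = r ^ n / n * Real.cos (2 * π * n * θ) := by
  rw [mul_pow, ← Complex.exp_nat_mul,
    show (r : ℂ) ^ n * Complex.exp (n * (2 * π * I * θ)) / n
      = ((r ^ n / n : ℝ) : ℂ) * Complex.exp ((2 * π * n * θ : ℝ) * I) by push_cast; ring_nf,
    Complex.re_ofReal_mul, Complex.exp_ofReal_mul_I_re]

theorem ae_exp_two_pi_I_mul_ne (c : ℂ) : ∀ᵐ θ : ℝ, Complex.exp (2 * π * I * θ) ≠ c := by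
  by_cases h : ∃ θ₀ : ℝ, Complex.exp (2 * π * I * θ₀) = c
  · obtain ⟨θ₀, rfl⟩ := h
    refine (Set.Countable.measure_zero ?_ volume : volume {θ : ℝ | _} = 0)
    refine (Set.countable_range fun n : ℤ => θ₀ + n).mono fun θ hθ => ?_
    obtain ⟨n, hn⟩ := Complex.exp_eq_exp_iff_exists_int.mp (not_not.mp hθ)
    have h2 : (2 * π * I : ℂ) ≠ 0 := by simp [pi_ne_zero]
    exact ⟨n, by exact_mod_cast (mul_left_cancel₀ h2 (by push_cast; linear_combination -hn) :
      ((θ₀ + n : ℝ) : ℂ) = θ)⟩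
  · push Not at h
    exact Filter.Eventually.of_forall h

theorem norm_one_sub_mul_sq {z : ℂ} (hz : ‖z‖ = 1) (r : ℝ) :
    ‖1 - r * z‖ ^ 2 = (1 - r) ^ 2 + r * ‖1 - z‖ ^ 2 := by
  have h := Complex.sq_norm z
  rw [hz, Complex.normSq_apply] at h
  simp only [Complex.sq_norm, Complex.normSq_apply, Complex.sub_re, Complex.sub_im, Complex.one_re,
    Complex.one_im, Complex.mul_re, Complex.mul_im, Complex.ofReal_re, Complex.ofReal_im]
  linear_combination (r - r ^ 2) * h

theorem abs_log_norm_one_sub_mul_le {z : ℂ} (hz : ‖z‖ = 1) (hz1 : z ≠ 1) {r : ℝ} (hr : 1 / 2 ≤ r)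
    (hr1 : r ≤ 1) : |Real.log ‖1 - r * z‖| ≤ |Real.log ‖1 - z‖| + Real.log 2 := by
  have hpos : 0 < ‖1 - z‖ := norm_pos_iff.mpr (sub_ne_zero.mpr (Ne.symm hz1))
  refine abs_log_le_abs_log_add_log_two hpos ?_ ?_
  · have h := norm_one_sub_mul_sq hz r
    refine (sq_le_sq₀ (by positivity) (norm_nonneg _)).mp ?_
    nlinarith [sq_nonneg (1 - r), sq_nonneg ‖1 - z‖]
  · refine (norm_sub_le _ _).trans ?_
    simp only [norm_one, Complex.norm_mul, norm_real, norm_eq_abs,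
      abs_of_nonneg (by linarith : 0 ≤ r), hz, mul_one]
    linarith

noncomputable def logNormOneSub (r θ : ℝ) : ℝ := Real.log ‖1 - r * Complex.exp (2 * π * I * θ)‖

-- The `n = 0` term vanishes because `r ^ 0 / 0 = 0`.
theorem hasSum_logNormOneSub {r : ℝ} (hr : |r| < 1) (θ : ℝ) :
    HasSum (fun n : ℕ => -(r ^ n / n * Real.cos (2 * π * n * θ))) (logNormOneSub r θ) := by
  have h := (Complex.hasSum_taylorSeries_neg_log (z := r * Complex.exp (2 * π * I * θ))
    (by simpa [norm_exp_two_pi_I_mul] using hr)).mapL Complex.reCLM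
  simp only [Complex.reCLM_apply, re_ofReal_mul_exp_pow_div, Complex.neg_re,
    Complex.log_re] at h
  simpa [logNormOneSub] using h.neg

theorem continuous_logNormOneSub {r : ℝ} (hr : |r| < 1) : Continuous (logNormOneSub r) := by
  refine Continuous.log (by fun_prop) fun θ => norm_ne_zero_iff.mpr (sub_ne_zero.mpr fun h => ?_)
  have : ‖(r : ℂ) * Complex.exp (2 * π * I * θ)‖ = 1 := by rw [← h, norm_one]
  rw [norm_mul, norm_exp_two_pi_I_mul, mul_one, Complex.norm_real, Real.norm_eq_abs] at this
  linarith

theorem continuousAt_logNormOneSub {r θ : ℝ} (h : 1 - r * Complex.exp (2 * π * I * θ) ≠ 0) :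
    ContinuousAt (fun s => logNormOneSub s θ) r :=
  ContinuousAt.log (by fun_prop) (norm_ne_zero_iff.mpr h)

theorem intervalIntegrable_logNormOneSub (r a b : ℝ) :
    IntervalIntegrable (logNormOneSub r) volume a b := by
  refine MeromorphicOn.intervalIntegrable_log_norm fun x _ => AnalyticAt.meromorphicAt ?_
  have hg : AnalyticAt ℂ (fun z : ℂ => 1 - r * Complex.exp (2 * π * I * z)) x := by fun_prop
  exact hg.restrictScalars.comp (Complex.ofRealCLM.analyticAt x)

-- At `j = 0` the right side is `0` by the convention `x / 0 = 0`, which is also the true value.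
theorem integral_logNormOneSub_mul_cos {r : ℝ} (hr : |r| < 1) (j : ℕ) :
    ∫ θ in (0 : ℝ)..1, logNormOneSub r θ * Real.cos (2 * π * j * θ) = -(r ^ j / (2 * j)) := by
  have hsum := intervalIntegral.hasSum_integral_of_dominated_convergence (a := 0) (b := 1)
    (μ := volume) (fun (k : ℕ) _ => |r| ^ k)
    (fun k => (by fun_prop : Continuous fun θ : ℝ =>
      -(r ^ k / k * Real.cos (2 * π * k * θ)) * Real.cos (2 * π * j * θ)).aestronglyMeasurable)
    (fun k => ae_of_all _ fun θ _ => by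
      rw [norm_mul, norm_neg]
      exact (mul_le_of_le_one_right (norm_nonneg _) (Real.abs_cos_le_one _)).trans
        (norm_pow_div_mul_cos_le r _ k))
    (ae_of_all _ fun _ _ => summable_geometric_of_lt_one (abs_nonneg r) hr)
    intervalIntegrable_const
    (ae_of_all _ fun θ _ => (hasSum_logNormOneSub hr θ).mul_right (Real.cos (2 * π * j * θ)))
  have hterm (k : ℕ) : ∫ θ in (0 : ℝ)..1,
      -(r ^ k / k * Real.cos (2 * π * k * θ)) * Real.cos (2 * π * j * θ)
        = if k = j then -(r ^ j / (2 * j)) else 0 := by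
    have h (θ : ℝ) : -(r ^ k / k * Real.cos (2 * π * k * θ)) * Real.cos (2 * π * j * θ)
        = -(r ^ k / k) * (Real.cos (2 * π * j * θ) * Real.cos (2 * π * k * θ)) := by ring
    simp only [h, intervalIntegral.integral_const_mul]
    rcases eq_or_ne k 0 with rfl | hk
    · split_ifs with hj
      · subst hj; simp
      · simp
    · rw [integral_cos_mul_cos hk]
      by_cases hkj : k = j
      · subst hkj; rw [if_pos rfl, if_pos rfl]; ring
      · simp [hkj, Ne.symm hkj]
  simp only [hterm] at hsum
  exact hsum.unique (hasSum_ite_eq j _)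

theorem hasSum_integral_logNormOneSub_mul {r s : ℝ} (hr : |r| < 1) (hs : |s| < 1) :
    HasSum (fun n : ℕ => (r * s) ^ n / (2 * n ^ 2))
      (∫ θ in (0 : ℝ)..1, logNormOneSub r θ * logNormOneSub s θ) := by
  obtain ⟨M, hM⟩ := (isCompact_Icc (a := (0 : ℝ)) (b := 1)).exists_bound_of_continuousOn
    (continuous_logNormOneSub hs).continuousOn
  have hsum := intervalIntegral.hasSum_integral_of_dominated_convergence (a := 0) (b := 1)
    (μ := volume)
    (F := fun (k : ℕ) θ => -(r ^ k / k * Real.cos (2 * π * k * θ)) * logNormOneSub s θ)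
    (fun k _ => |r| ^ k * M)
    (fun k => ((by fun_prop : Continuous fun θ : ℝ => -(r ^ k / k * Real.cos (2 * π * k * θ))).mul
      (continuous_logNormOneSub hs)).aestronglyMeasurable)
    (fun k => ae_of_all _ fun θ hθ => by
      rw [norm_mul, norm_neg]
      exact mul_le_mul (norm_pow_div_mul_cos_le r _ k)
        (hM θ (Ioc_subset_Icc_self (by simpa using hθ))) (norm_nonneg _) (by positivity))
    (ae_of_all _ fun _ _ => (summable_geometric_of_lt_one (abs_nonneg r) hr).mul_right M)
    intervalIntegrable_const
    (ae_of_all _ fun θ _ => (hasSum_logNormOneSub hr θ).mul_right (logNormOneSub s θ))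
  have hterm (n : ℕ) : ∫ θ in (0 : ℝ)..1,
      -(r ^ n / n * Real.cos (2 * π * n * θ)) * logNormOneSub s θ = (r * s) ^ n / (2 * n ^ 2) := by
    have h (θ : ℝ) : -(r ^ n / n * Real.cos (2 * π * n * θ)) * logNormOneSub s θ
        = -(r ^ n / n) * (logNormOneSub s θ * Real.cos (2 * π * n * θ)) := by ring
    simp only [h, intervalIntegral.integral_const_mul, integral_logNormOneSub_mul_cos hs]
    ring
  simpa only [hterm] using hsum

theorem abs_logNormOneSub_mul_neg_le {r : ℝ} (hr : |r| ≤ 1) (θ : ℝ) :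
    |logNormOneSub r θ * logNormOneSub (-r) θ| ≤ |logNormOneSub r θ| + |logNormOneSub (-r) θ| := by
  set w : ℂ := r * Complex.exp (2 * π * I * θ)
  have hw : ‖w‖ ≤ 1 := by simpa [w, norm_exp_two_pi_I_mul] using hr
  have hL : logNormOneSub (-r) θ = Real.log ‖1 + w‖ := by
    simp [logNormOneSub, w, sub_eq_add_neg]
  have hpar := parallelogram_law_with_norm ℝ (1 : ℂ) w
  rw [norm_one] at hpar
  have hle (v : ℂ) : ‖v‖ ≤ 1 → ‖1 + v‖ ≤ 2 := fun hv =>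
    (norm_add_le _ _).trans (by rw [norm_one]; linarith)
  rw [hL, logNormOneSub]
  rcases le_or_gt 1 ‖1 + w‖ with h | h
  · rw [mul_comm]
    exact (abs_log_mul_log_le_abs_log h (hle w hw) _).trans
      (le_add_of_nonneg_right (abs_nonneg _))
  · have h' : 1 ≤ ‖1 - w‖ := by
      by_contra h'
      push Not at h'
      nlinarith [norm_nonneg (1 + w), norm_nonneg (1 - w), norm_nonneg w]
    have hle' : ‖1 - w‖ ≤ 2 := by simpa [sub_eq_add_neg] using hle (-w) (by simpa using hw)
    exact (abs_log_mul_log_le_abs_log h' hle' _).trans (le_add_of_nonneg_left (abs_nonneg _))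

theorem tendsto_integral_logNormOneSub_mul_neg :
    Tendsto (fun r => ∫ θ in (0 : ℝ)..1, logNormOneSub r θ * logNormOneSub (-r) θ) (𝓝[<] 1)
      (𝓝 (∫ θ in (0 : ℝ)..1, logNormOneSub 1 θ * logNormOneSub (-1) θ)) := by
  refine intervalIntegral.tendsto_integral_filter_of_dominated_convergence
    (fun θ => |logNormOneSub 1 θ| + |logNormOneSub (-1) θ| + 2 * Real.log 2) ?_ ?_ ?_ ?_
  · exact Eventually.of_forall fun r => (by unfold logNormOneSub; fun_prop :
      Measurable fun θ => logNormOneSub r θ * logNormOneSub (-r) θ).aestronglyMeasurable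
  · filter_upwards [Ioo_mem_nhdsLT (show (1 / 2 : ℝ) < 1 by norm_num)] with r hr
    filter_upwards [ae_exp_two_pi_I_mul_ne 1, ae_exp_two_pi_I_mul_ne (-1)] with θ h1 h2 _
    have hz := norm_exp_two_pi_I_mul θ
    have b1 : |logNormOneSub r θ| ≤ |logNormOneSub 1 θ| + Real.log 2 := by
      simpa [logNormOneSub] using abs_log_norm_one_sub_mul_le hz h1 hr.1.le hr.2.le
    have b2 : |logNormOneSub (-r) θ| ≤ |logNormOneSub (-1) θ| + Real.log 2 := by
      simpa [logNormOneSub] using abs_log_norm_one_sub_mul_le (z := -Complex.exp (2 * π * I * θ))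
        (by rwa [norm_neg]) (fun h => h2 (neg_eq_iff_eq_neg.mp h)) hr.1.le hr.2.le
    have hprod := abs_logNormOneSub_mul_neg_le (abs_le.mpr ⟨by linarith [hr.1], hr.2.le⟩) θ
    rw [Real.norm_eq_abs]
    linarith
  · exact (((intervalIntegrable_logNormOneSub 1 0 1).abs).add
      (intervalIntegrable_logNormOneSub (-1) 0 1).abs).add intervalIntegrable_const
  · filter_upwards [ae_exp_two_pi_I_mul_ne 1, ae_exp_two_pi_I_mul_ne (-1)] with θ h1 h2 _
    have hc1 : ContinuousAt (fun s => logNormOneSub s θ) 1 :=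
      continuousAt_logNormOneSub (sub_ne_zero.mpr (by simpa using h1.symm))
    have hc2 : ContinuousAt (fun s => logNormOneSub (-s) θ) 1 :=
      (continuousAt_logNormOneSub (r := -1) (θ := θ) fun h => h2 (by
        push_cast at h; linear_combination h)).comp_of_eq continuous_neg.continuousAt (by norm_num)
    exact (hc1.mul hc2).tendsto.mono_left nhdsWithin_le_nhds

theorem hasSum_neg_one_pow_div_sq :
    HasSum (fun n : ℕ => (-1 : ℝ) ^ n / (n : ℝ) ^ 2) (-(π ^ 2 / 12)) := by
  convert hasSum_one_div_nat_pow_mul_cos one_ne_zero (x := 1 / 2) (by norm_num) using 1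
  · ext n
    rw [show 2 * π * n * (1 / 2) = n * π by ring, Real.cos_nat_mul_pi]
    ring
  · have h := bernoulliFun_two (1 / 2)
    rw [bernoulliFun] at h
    rw [show 2 * 1 = 2 from rfl, h]
    norm_num [Nat.factorial]
    ring

theorem tendsto_tsum_mul_neg_pow_div_sq :
    Tendsto (fun r : ℝ => ∑' n : ℕ, (r * -r) ^ n / (2 * n ^ 2)) (𝓝[<] 1) (𝓝 (-π ^ 2 / 24)) := by
  have hval : ∑' n : ℕ, ((1 : ℝ) * -1) ^ n / (2 * n ^ 2) = -π ^ 2 / 24 := by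
    rw [((hasSum_neg_one_pow_div_sq.div_const 2).congr_fun fun n => by ring).tsum_eq]
    ring
  rw [← hval]
  refine tendsto_tsum_of_dominated_convergence (bound := fun n : ℕ => 1 / (n : ℝ) ^ 2)
    (Real.summable_one_div_nat_pow.mpr one_lt_two) (fun n => ?_) ?_
  · exact ((continuous_id.mul continuous_id.neg).pow n |>.div_const _).tendsto 1 |>.mono_left
      nhdsWithin_le_nhds
  · filter_upwards [Ioo_mem_nhdsLT (show (0 : ℝ) < 1 by norm_num)] with r hr n
    have hpow : |r * -r| ^ n ≤ 1 := pow_le_one₀ (abs_nonneg _) (by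
      rw [abs_mul, abs_neg, abs_of_pos hr.1]; nlinarith [hr.1, hr.2])
    rcases eq_or_ne n 0 with rfl | hn
    · simp
    calc ‖(r * -r) ^ n / (2 * n ^ 2)‖ = |r * -r| ^ n / (2 * n ^ 2) := by
          rw [norm_div, norm_pow, Real.norm_eq_abs, Real.norm_of_nonneg (by positivity)]
      _ ≤ 1 / (1 * n ^ 2) := by gcongr; norm_num
      _ = 1 / n ^ 2 := by rw [one_mul]

theorem m_x_minus_one_x_plus_one :
    ∫ θ in (0:ℝ)..1,
      Real.log ‖1 - Complex.exp (2 * π * I * θ)‖ *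
      Real.log ‖1 + Complex.exp (2 * π * I * θ)‖
      = -π^2 / 24 := by
  have hseries : Tendsto (fun r => ∫ θ in (0 : ℝ)..1, logNormOneSub r θ * logNormOneSub (-r) θ)
      (𝓝[<] 1) (𝓝 (-π ^ 2 / 24)) := by
    refine tendsto_tsum_mul_neg_pow_div_sq.congr' ?_
    filter_upwards [Ioo_mem_nhdsLT (show (0 : ℝ) < 1 by norm_num)] with r hr
    have hr' : |r| < 1 := abs_lt.mpr ⟨by linarith [hr.1], hr.2⟩
    exact (hasSum_integral_logNormOneSub_mul hr' (by rwa [abs_neg])).tsum_eq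
  simpa [logNormOneSub, sub_eq_add_neg] using
    tendsto_nhds_unique tendsto_integral_logNormOneSub_mul_neg hseries
end

section
/- For real s > -1, ∫₀¹ (2 sin πθ)^s dθ = Γ(s+1)/Γ(s/2+1)². -/
/-!
The substitution `x = sin² t` turns the Beta integral `B(a, b) = Γ(a) Γ(b) / Γ(a + b)` into
`2 ∫₀^{π/2} sin^{2a-1} t cos^{2b-1} t dt`. Taking `a = (s + 1) / 2`, `b = 1 / 2` and using the
symmetry `sin (π - t) = sin t` gives `∫₀^π sin^s t dt = √π Γ((s + 1) / 2) / Γ(s / 2 + 1)`, which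
Legendre's duplication formula rewrites as `π Γ(s + 1) / (2^s Γ(s / 2 + 1)²)`. The theorem follows
by pulling out `2^s` and rescaling `t = π θ`.
-/

open Real MeasureTheory Set intervalIntegral

lemma ofReal_rpow_mul_one_sub_rpow {x : ℝ} (hx : x ∈ Icc (0 : ℝ) 1) (a b : ℝ) :
    ((x ^ (a - 1) * (1 - x) ^ (b - 1) : ℝ) : ℂ)
      = (x : ℂ) ^ ((a : ℂ) - 1) * (1 - (x : ℂ)) ^ ((b : ℂ) - 1) := by
  push_cast [Complex.ofReal_cpow hx.1, Complex.ofReal_cpow (sub_nonneg.2 hx.2)]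
  rfl

lemma two_mul_sin_mul_cos_mul_rpow_sin_sq_eqOn (a b : ℝ) :
    EqOn (fun t ↦ 2 * sin t * cos t * ((sin t ^ 2) ^ (a - 1) * (1 - sin t ^ 2) ^ (b - 1)))
      (fun t ↦ 2 * (sin t ^ (2 * a - 1) * cos t ^ (2 * b - 1))) (Ioo 0 (π / 2)) := by
  intro t ht
  have hsin : 0 < sin t := sin_pos_of_pos_of_lt_pi ht.1 (by linarith [ht.2, pi_pos])
  have hcos : 0 < cos t := cos_pos_of_mem_Ioo ⟨by linarith [ht.1, pi_pos], ht.2⟩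
  have mul_sq_rpow {y : ℝ} (hy : 0 < y) (c : ℝ) : y * (y ^ 2) ^ (c - 1) = y ^ (2 * c - 1) := by
    rw [← rpow_natCast, ← rpow_mul hy.le, show 2 * c - 1 = 1 + (2 : ℕ) * (c - 1) by push_cast; ring,
      rpow_add hy, rpow_one]
  simp only
  rw [← cos_sq', ← mul_sq_rpow hsin, ← mul_sq_rpow hcos]
  ring

lemma hasDerivAt_sin_sq (t : ℝ) : HasDerivAt (fun t ↦ sin t ^ 2) (2 * sin t * cos t) t := by
  simpa using (hasDerivAt_sin t).fun_pow 2

lemma two_mul_sin_mul_cos_nonneg {t : ℝ} (ht : t ∈ Ioo 0 (π / 2)) : 0 ≤ 2 * sin t * cos t := by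
  have := sin_nonneg_of_nonneg_of_le_pi ht.1.le (by linarith [ht.2, pi_pos])
  have := cos_nonneg_of_mem_Icc ⟨by linarith [ht.1, pi_pos], ht.2.le⟩
  positivity

section Beta

variable {a b : ℝ}

lemma intervalIntegrable_rpow_mul_one_sub_rpow (ha : 0 < a) (hb : 0 < b) :
    IntervalIntegrable (fun x ↦ x ^ (a - 1) * (1 - x) ^ (b - 1)) volume 0 1 := by
  have h := (Complex.betaIntegral_convergent (u := a) (v := b) (by simpa) (by simpa)).norm
  refine h.congr fun x hx ↦ ?_
  rw [uIoc_of_le zero_le_one] at hx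
  rw [← ofReal_rpow_mul_one_sub_rpow (Ioc_subset_Icc_self hx), Complex.norm_real, norm_of_nonneg]
  exact mul_nonneg (rpow_nonneg hx.1.le _) (rpow_nonneg (sub_nonneg.2 hx.2) _)

lemma integral_rpow_mul_one_sub_rpow (ha : 0 < a) (hb : 0 < b) :
    ∫ x in (0 : ℝ)..1, x ^ (a - 1) * (1 - x) ^ (b - 1) = Gamma a * Gamma b / Gamma (a + b) := by
  have h := Complex.betaIntegral_eq_Gamma_mul_div a b (by simpa) (by simpa)
  rw [Complex.betaIntegral, ← integral_congr (fun x hx ↦ ofReal_rpow_mul_one_sub_rpow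
    (by rwa [uIcc_of_le zero_le_one] at hx) a b), integral_ofReal, ← Complex.ofReal_add] at h
  simp only [Complex.Gamma_ofReal] at h
  exact_mod_cast h

lemma integral_sin_rpow_mul_cos_rpow (ha : 0 < a) (hb : 0 < b) :
    ∫ t in (0 : ℝ)..(π / 2), sin t ^ (2 * a - 1) * cos t ^ (2 * b - 1)
      = Gamma a * Gamma b / (2 * Gamma (a + b)) := by
  have hsub := integral_Icc_deriv_smul_of_deriv_nonneg (f := fun t ↦ sin t ^ 2)
    (g := fun x ↦ x ^ (a - 1) * (1 - x) ^ (b - 1)) (by fun_prop)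
    (fun t _ ↦ hasDerivAt_sin_sq t) (fun _ ht ↦ two_mul_sin_mul_cos_nonneg ht) (by positivity)
  simp only [smul_eq_mul, sin_zero, sin_pi_div_two, one_pow, ne_eq, OfNat.ofNat_ne_zero,
    not_false_eq_true, zero_pow] at hsub
  rw [integral_Icc_eq_integral_Ioo,
    setIntegral_congr_fun measurableSet_Ioo (two_mul_sin_mul_cos_mul_rpow_sin_sq_eqOn a b),
    MeasureTheory.integral_const_mul, integral_Icc_eq_integral_Ioc, ← integral_of_le zero_le_one,
    integral_rpow_mul_one_sub_rpow ha hb] at hsub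
  rw [integral_of_le (by positivity), integral_Ioc_eq_integral_Ioo, mul_comm 2 (Gamma _), ← div_div,
    ← hsub]
  ring

lemma intervalIntegrable_sin_rpow_mul_cos_rpow (ha : 0 < a) (hb : 0 < b) :
    IntervalIntegrable (fun t ↦ sin t ^ (2 * a - 1) * cos t ^ (2 * b - 1)) volume 0 (π / 2) := by
  have hsub := integrableOn_Icc_deriv_smul_iff_of_deriv_nonneg (f := fun t ↦ sin t ^ 2)
    (g := fun x ↦ x ^ (a - 1) * (1 - x) ^ (b - 1)) (by fun_prop)
    (fun t _ ↦ hasDerivAt_sin_sq t) (fun _ ht ↦ two_mul_sin_mul_cos_nonneg ht) (by positivity)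
  simp only [smul_eq_mul, sin_zero, sin_pi_div_two, one_pow, ne_eq, OfNat.ofNat_ne_zero,
    not_false_eq_true, zero_pow] at hsub
  rw [integrableOn_Icc_iff_integrableOn_Ioo,
    integrableOn_congr_fun (two_mul_sin_mul_cos_mul_rpow_sin_sq_eqOn a b) measurableSet_Ioo,
    ← intervalIntegrable_iff_integrableOn_Icc_of_le zero_le_one] at hsub
  rw [intervalIntegrable_iff_integrableOn_Ioo_of_le (by positivity)]
  simpa [IntegrableOn] using
    (hsub.2 (intervalIntegrable_rpow_mul_one_sub_rpow ha hb)).const_mul (1 / 2)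

end Beta

section SinPow

variable {s : ℝ}

lemma sqrt_pi_mul_Gamma_add_one_div_two (hs : -2 < s) :
    √π * Gamma ((s + 1) / 2) = π * Gamma (s + 1) / (2 ^ s * Gamma (s / 2 + 1)) := by
  have hdup := Gamma_mul_Gamma_add_half ((s + 1) / 2)
  rw [show (s + 1) / 2 + 1 / 2 = s / 2 + 1 by ring, show 2 * ((s + 1) / 2) = s + 1 by ring,
    show 1 - (s + 1) = -s by ring, rpow_neg zero_le_two] at hdup
  have hΓ : Gamma (s / 2 + 1) ≠ 0 := (Gamma_pos_of_pos (by linarith)).ne'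
  rw [eq_div_iff (by positivity)]
  calc √π * Gamma ((s + 1) / 2) * (2 ^ s * Gamma (s / 2 + 1))
      = √π * 2 ^ s * (Gamma ((s + 1) / 2) * Gamma (s / 2 + 1)) := by ring
    _ = √π * √π * Gamma (s + 1) := by
      rw [hdup]
      field_simp
    _ = π * Gamma (s + 1) := by rw [mul_self_sqrt pi_pos.le]

lemma integral_sin_rpow_of_le_pi_div_two (hs : -1 < s) :
    ∫ t in (0 : ℝ)..(π / 2), sin t ^ s = √π * Gamma ((s + 1) / 2) / (2 * Gamma (s / 2 + 1)) := by
  have h := integral_sin_rpow_mul_cos_rpow (a := (s + 1) / 2) (b := 1 / 2) (by linarith)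
    one_half_pos
  simp only [show 2 * ((s + 1) / 2) - 1 = s by ring, show 2 * (1 / 2 : ℝ) - 1 = 0 by norm_num,
    rpow_zero, mul_one, show (s + 1) / 2 + 1 / 2 = s / 2 + 1 by ring, Gamma_one_half_eq] at h
  rw [h, mul_comm √π]

lemma intervalIntegrable_sin_rpow_of_le_pi_div_two (hs : -1 < s) :
    IntervalIntegrable (fun t ↦ sin t ^ s) volume 0 (π / 2) := by
  have h := intervalIntegrable_sin_rpow_mul_cos_rpow (a := (s + 1) / 2) (b := 1 / 2)
    (by linarith) one_half_pos
  simpa only [show 2 * ((s + 1) / 2) - 1 = s by ring, show 2 * (1 / 2 : ℝ) - 1 = 0 by norm_num,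
    rpow_zero, mul_one] using h

lemma integral_sin_rpow (hs : -1 < s) :
    ∫ t in (0 : ℝ)..π, sin t ^ s = π * Gamma (s + 1) / (2 ^ s * Gamma (s / 2 + 1) ^ 2) := by
  have hsymm : ∫ t in (π / 2)..π, sin t ^ s = ∫ t in (0 : ℝ)..(π / 2), sin t ^ s := by
    simpa [sub_half] using (integral_comp_sub_left (fun t ↦ sin t ^ s) π (a := 0) (b := π / 2)).symm
  have hint := intervalIntegrable_sin_rpow_of_le_pi_div_two hs
  have hint' : IntervalIntegrable (fun t ↦ sin t ^ s) volume (π / 2) π := by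
    simpa [sub_half] using (hint.comp_sub_left π).symm
  rw [← integral_add_adjacent_intervals hint hint', hsymm, integral_sin_rpow_of_le_pi_div_two hs,
    sqrt_pi_mul_Gamma_add_one_div_two (by linarith)]
  field_simp
  ring

end SinPow

theorem zeta_mahler_x_minus_one (s : ℝ) (hs : -1 < s) :
    ∫ θ in (0:ℝ)..1, (2 * Real.sin (π * θ)) ^ s
      = Real.Gamma (s + 1) / (Real.Gamma (s / 2 + 1)) ^ 2 := by
  have hmul : ∀ θ ∈ uIcc (0 : ℝ) 1, (2 * sin (π * θ)) ^ s = 2 ^ s * sin (π * θ) ^ s := by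
    intro θ hθ
    rw [uIcc_of_le zero_le_one] at hθ
    exact mul_rpow zero_le_two (sin_nonneg_of_nonneg_of_le_pi (by nlinarith [pi_pos, hθ.1])
      (by nlinarith [pi_pos, hθ.2]))
  rw [integral_congr hmul, intervalIntegral.integral_const_mul,
    integral_comp_mul_left (fun t ↦ sin t ^ s) pi_ne_zero, mul_zero, mul_one, integral_sin_rpow hs,
    smul_eq_mul]
  field_simp
end

section
/- The function s ↦ Γ(s+1)/Γ(s/2+1)² has the expansion exp(∑_{k≥2} (-1)^k (1 - 2^{1-k}) ζ(k) s^k / k) in a neighborhood of s = 0. -/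
/-!
In Euler's limit formula `Γ(x) = lim n^x n! / (x (x+1) ⋯ (x+n))` the powers of `n` cancel in the
ratio `Γ(s+1)/Γ(s/2+1)^2`, which is therefore the convergent product
`∏_{m ≥ 1} (1 + s/(2m))^2 / (1 + s/m)`. Its logarithm is `∑_m (2 log(1 + t_m/2) - log(1 + t_m))`
with `t_m = s/m`; expanding each logarithm in powers of `t_m` gives an absolutely convergent double
series for `|s| < 1`, and summing it over `m` first turns `∑_m m^{-k}` into `ζ(k)`.
-/

open Real Complex

open scoped Nat

open Filter Topology Finset

lemma hasSum_alternating_pow_div_log_one_add {t : ℝ} (ht : |t| < 1) :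
    HasSum (fun n : ℕ => (-1) ^ n * t ^ (n + 1) / (n + 1)) (Real.log (1 + t)) := by
  have h := (hasSum_pow_div_log_of_abs_lt_one (x := -t) (by rwa [abs_neg])).neg
  rw [neg_neg, sub_neg_eq_add] at h
  refine h.congr_fun fun n => ?_
  rw [neg_pow]
  ring

noncomputable def logRatioCoeff (k : ℕ) : ℝ :=
  (-1) ^ (k + 2) * (1 - (2 : ℝ) ^ (-(k : ℤ) - 1)) / (k + 2)

lemma abs_logRatioCoeff_le_one (k : ℕ) : |logRatioCoeff k| ≤ 1 := by
  have hpos : (0 : ℝ) < 2 ^ (-(k : ℤ) - 1) := by positivity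
  have hle : (2 : ℝ) ^ (-(k : ℤ) - 1) ≤ 1 := zpow_le_one_of_nonpos₀ one_le_two (by omega)
  rw [logRatioCoeff, abs_div, abs_mul, abs_pow, abs_neg, abs_one, one_pow, one_mul,
    abs_of_pos (by positivity : (0 : ℝ) < k + 2), div_le_one (by positivity), abs_le]
  constructor <;> linarith [(k.cast_nonneg : (0 : ℝ) ≤ k)]

lemma hasSum_logRatioCoeff_mul_pow {t : ℝ} (ht : |t| < 1) :
    HasSum (fun k : ℕ => logRatioCoeff k * t ^ (k + 2))
      (2 * Real.log (1 + t / 2) - Real.log (1 + t)) := by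
  have ht2 : |t / 2| < 1 := by rw [abs_div, abs_two]; linarith [abs_nonneg t]
  have H := ((hasSum_alternating_pow_div_log_one_add ht2).mul_left 2).sub
    (hasSum_alternating_pow_div_log_one_add ht)
  -- the linear terms cancel
  rw [← hasSum_nat_add_iff' 1] at H
  norm_num [mul_div_cancel₀] at H
  refine H.congr_fun fun k => ?_
  have hz : (2 : ℝ) ^ (-(k : ℤ) - 1) = ((2 : ℝ) ^ (k + 1))⁻¹ := by
    rw [← zpow_natCast, ← zpow_neg]; push_cast; ring_nf
  rw [logRatioCoeff, hz, div_pow]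
  field_simp
  ring

lemma abs_div_natCast_add_one_le (s : ℝ) (m : ℕ) : |s / (m + 1)| ≤ |s| := by
  rw [abs_div, abs_of_pos (by positivity : (0 : ℝ) < m + 1)]
  exact div_le_self (abs_nonneg s) (by linarith [(m.cast_nonneg : (0 : ℝ) ≤ m)])

lemma summable_logRatioCoeff_mul_div_pow {s : ℝ} (hs : |s| < 1) :
    Summable (fun p : ℕ × ℕ => logRatioCoeff p.2 * (s / (p.1 + 1)) ^ (p.2 + 2)) := by
  have hgeom : Summable (fun k : ℕ => |s| ^ (k + 2)) :=
    (summable_geometric_of_lt_one (abs_nonneg s) hs).comp_injective (add_left_injective 2)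
  have hzeta : Summable (fun m : ℕ => (1 / ((m : ℝ) + 1)) ^ 2) := by
    have := (summable_nat_add_iff 1).mpr (Real.summable_one_div_nat_pow.mpr one_lt_two)
    simpa [div_pow] using this
  refine .of_norm_bounded (hzeta.mul_of_nonneg hgeom (fun _ => by positivity)
    (fun _ => by positivity)) fun ⟨m, k⟩ => ?_
  have hm : 1 / ((m : ℝ) + 1) ≤ 1 := by
    rw [div_le_one (by positivity)]; linarith [(m.cast_nonneg : (0 : ℝ) ≤ m)]
  calc ‖logRatioCoeff k * (s / (m + 1)) ^ (k + 2)‖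
      = |logRatioCoeff k| * ((1 / ((m : ℝ) + 1)) ^ (k + 2) * |s| ^ (k + 2)) := by
        rw [norm_mul, norm_pow, Real.norm_eq_abs, Real.norm_eq_abs, abs_div,
          abs_of_pos (by positivity : (0 : ℝ) < m + 1)]
        ring
    _ ≤ 1 * ((1 / ((m : ℝ) + 1)) ^ 2 * |s| ^ (k + 2)) :=
        mul_le_mul (abs_logRatioCoeff_le_one k) (mul_le_mul_of_nonneg_right
          (pow_le_pow_of_le_one (by positivity) hm (by omega)) (by positivity))
          (by positivity) zero_le_one
    _ = _ := one_mul _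

namespace Real

lemma GammaSeq_add_one_eq_div_prod (x : ℝ) (n : ℕ) :
    GammaSeq (x + 1) n = n ^ (x + 1) / ((n + 1) * ∏ j ∈ range (n + 1), (1 + x / (j + 1))) := by
  have hfactor : ∏ j ∈ range (n + 1), (x + 1 + j)
      = (n + 1)! * ∏ j ∈ range (n + 1), (1 + x / (j + 1)) := by
    rw [← prod_range_add_one_eq_factorial, Nat.cast_prod, ← prod_mul_distrib]
    refine prod_congr rfl fun j _ => ?_
    push_cast
    field_simp
    ring
  have hfact : (n ! : ℝ) ≠ 0 := by positivity
  rw [GammaSeq, hfactor, Nat.factorial_succ, Nat.cast_mul]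
  push_cast
  field_simp

lemma tendsto_prod_sq_div_prod_Gamma {x : ℝ} (hx : Gamma (x / 2 + 1) ≠ 0) :
    Tendsto (fun n : ℕ => ∏ j ∈ range n, (1 + x / (j + 1) / 2) ^ 2 / (1 + x / (j + 1)))
      atTop (𝓝 (Gamma (x + 1) / Gamma (x / 2 + 1) ^ 2)) := by
  rw [← tendsto_add_atTop_iff_nat 1]
  have hGammaSeq := (tendsto_natCast_div_add_atTop (1 : ℝ)).mul
    ((GammaSeq_tendsto_Gamma (x + 1)).div ((GammaSeq_tendsto_Gamma (x / 2 + 1)).pow 2)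
      (pow_ne_zero 2 hx))
  rw [one_mul] at hGammaSeq
  refine hGammaSeq.congr' ?_
  filter_upwards [eventually_gt_atTop 0] with n hn
  have hn : (0 : ℝ) < n := by exact_mod_cast hn
  have hrpow : ((n : ℝ) ^ (x / 2 + 1)) ^ 2 = n ^ (x + 1) * n := by
    rw [← rpow_natCast, ← rpow_mul hn.le, ← rpow_add_one hn.ne']; ring_nf
  simp_rw [Pi.div_apply, div_right_comm x _ (2 : ℝ), prod_div_distrib, prod_pow,
    GammaSeq_add_one_eq_div_prod, div_pow, mul_pow, hrpow]
  field_simp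

end Real

lemma exp_eq_Gamma_ratio_of_hasSum {s S : ℝ} (hs : |s| < 1)
    (h : HasSum (fun m : ℕ => 2 * Real.log (1 + s / (m + 1) / 2) - Real.log (1 + s / (m + 1))) S) :
    Real.exp S = Real.Gamma (s + 1) / Real.Gamma (s / 2 + 1) ^ 2 := by
  have hGamma : Real.Gamma (s / 2 + 1) ≠ 0 :=
    (Real.Gamma_pos_of_pos (by linarith [(abs_lt.mp hs).1])).ne'
  refine tendsto_nhds_unique ((Real.continuous_exp.tendsto S).comp h.tendsto_sum_nat)
    ((Real.tendsto_prod_sq_div_prod_Gamma hGamma).congr fun N => ?_)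
  rw [Function.comp_apply, Real.exp_sum]
  refine prod_congr rfl fun m _ => ?_
  have ht := (abs_div_natCast_add_one_le s m).trans_lt hs
  have h1 : 0 < 1 + s / (m + 1) := by linarith [(abs_lt.mp ht).1]
  have h2 : 0 < 1 + s / (m + 1) / 2 := by linarith [(abs_lt.mp ht).1]
  rw [Real.exp_sub, two_mul, Real.exp_add, Real.exp_log h1, Real.exp_log h2, sq]

lemma riemannZeta_natCast_add_two (k : ℕ) :
    riemannZeta (k + 2) = ((∑' m : ℕ, (1 / ((m : ℝ) + 1)) ^ (k + 2) : ℝ) : ℂ) := by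
  have hk : ((k : ℂ) + 2) = ((k + 2 : ℕ) : ℂ) := by push_cast; rfl
  rw [zeta_eq_tsum_one_div_nat_add_one_cpow (by rw [hk, natCast_re]; norm_cast; omega),
    Complex.ofReal_tsum, hk]
  refine tsum_congr fun m => ?_
  rw [cpow_natCast]
  push_cast
  rw [div_pow, one_pow]

theorem gamma_ratio_exp_zeta :
    ∃ ε > (0:ℝ), ∀ s : ℝ, |s| < ε →
      ((Real.Gamma (s + 1) / (Real.Gamma (s / 2 + 1)) ^ 2 : ℝ) : ℂ)
        = Complex.exp (∑' k : ℕ,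
            (-1) ^ (k + 2) * (1 - (2:ℂ) ^ (-(k:ℤ) - 1)) * riemannZeta (k + 2)
              * (s:ℂ) ^ (k + 2) / ((k:ℂ) + 2)) := by
  refine ⟨1, one_pos, fun s hs => ?_⟩
  have hF := summable_logRatioCoeff_mul_div_pow hs
  have hlog : ∀ m : ℕ, HasSum (fun k : ℕ => logRatioCoeff k * (s / (m + 1)) ^ (k + 2))
      (2 * Real.log (1 + s / (m + 1) / 2) - Real.log (1 + s / (m + 1))) :=
    fun m => hasSum_logRatioCoeff_mul_pow ((abs_div_natCast_add_one_le s m).trans_lt hs)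
  have hzeta := ((Equiv.prodComm ℕ ℕ).hasSum_iff.mpr hF.hasSum).prod_fiberwise
    fun k => (hF.prod_symm.prod_factor k).hasSum
  rw [← exp_eq_Gamma_ratio_of_hasSum hs (hF.hasSum.prod_fiberwise hlog), Complex.ofReal_exp,
    ← hzeta.tsum_eq, Complex.ofReal_tsum]
  congr 1
  refine tsum_congr fun k => ?_
  have hfiber : ∑' m : ℕ, logRatioCoeff k * (s / (m + 1)) ^ (k + 2)
      = logRatioCoeff k * s ^ (k + 2) * ∑' m : ℕ, (1 / ((m : ℝ) + 1)) ^ (k + 2) := by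
    rw [← tsum_mul_left]
    congr 1 with m
    rw [mul_assoc, ← mul_pow, mul_one_div]
  simp only [Prod.swap_prod_mk]
  rw [hfiber, riemannZeta_natCast_add_two, logRatioCoeff]
  push_cast
  ring
end

section
/- For real t with |t| ≤ 1/4, ∑_{k≥1} C(2k,k) t^k / k² = 2 Li₂((1 - √(1-4t))/2) - (log((1 + √(1-4t))/2))², where C(2k,k) is the central binomial coefficient and Li₂ the dilogarithm. -/
/-!
Write `t = x (1 - x)` with `x < 1/2`, so that `√(1 - 4t) = 1 - 2x`, and let
`Sₘ(s) = ∑_{k ≥ 1} C(2k,k) sᵏ / kᵐ`. The claim becomes `S₂(x(1-x)) = 2 Li₂(x) - log²(1 - x)`.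
Since `s S'ₘ₊₁(s) = Sₘ(s)`, comparing derivatives in `x` reduces it to
`S₁(x(1-x)) = -2 log(1 - x)`, and that in turn to `1 + S₀(x(1-x)) = 1 / (1 - 2x)`.
The last identity holds because `(1 - 4s) S₀'(s) = 2 (1 + S₀(s))`, which is the recurrence
`(k+1) C(2k+2,k+1) = 2 (2k+1) C(2k,k)`. The boundary case `|t| = 1/4` follows by continuity,
as `C(2k,k) ≤ 4ᵏ` makes the series converge uniformly there.
-/

open Real

/-- The real dilogarithm `Li₂(x) = ∑_{n ≥ 1} xⁿ / n²`. -/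
noncomputable def Li2 (x : ℝ) : ℝ := ∑' n : ℕ, x ^ (n + 1) / ((n : ℝ) + 1) ^ 2

open Set

theorem hasDerivAt_tsum_mul_pow_succ_div {a : ℕ → ℝ} {r t : ℝ}
    (ha : Summable fun k ↦ |a k| * r ^ k) (ht : |t| < r) :
    HasDerivAt (fun s ↦ ∑' k, a k * s ^ (k + 1) / (k + 1)) (∑' k, a k * t ^ k) t := by
  have hr : 0 < r := (abs_nonneg t).trans_lt ht
  refine hasDerivAt_tsum_of_isPreconnected (g := fun k s ↦ a k * s ^ (k + 1) / (k + 1))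
    (g' := fun k s ↦ a k * s ^ k) (y₀ := 0)
    ha isOpen_Ioo isPreconnected_Ioo (fun k y _ ↦ ?_) (fun k y hy ↦ ?_)
    ⟨neg_lt_zero.mpr hr, hr⟩ (by simp) (abs_lt.mp ht)
  · refine (((hasDerivAt_pow (k + 1) y).const_mul (a k)).div_const ((k : ℝ) + 1)).congr_deriv ?_
    push_cast
    field_simp
  · rw [norm_mul, norm_pow, Real.norm_eq_abs]
    gcongr
    exact abs_le.mpr ⟨hy.1.le, hy.2.le⟩

theorem continuousOn_tsum_mul_pow_succ_div_sq {a : ℕ → ℝ} {R : ℝ}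
    (ha : ∀ k, |a k| * R ^ (k + 1) ≤ 1) :
    ContinuousOn (fun x ↦ ∑' k, a k * x ^ (k + 1) / ((k : ℝ) + 1) ^ 2) (Icc (-R) R) := by
  refine continuousOn_tsum (u := fun k : ℕ ↦ 1 / ((k : ℝ) + 1) ^ 2) (fun k ↦ by fun_prop) ?_
    fun k x hx ↦ ?_
  · exact_mod_cast (summable_nat_add_iff 1).mpr (Real.summable_one_div_nat_pow.mpr one_lt_two)
  · simp only [norm_div, norm_mul, norm_pow, Real.norm_eq_abs]
    rw [abs_of_pos (by positivity : (0 : ℝ) < k + 1)]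
    gcongr
    calc |a k| * |x| ^ (k + 1) ≤ |a k| * R ^ (k + 1) := by gcongr; exact abs_le.mpr hx
      _ ≤ 1 := ha k

theorem hasDerivAt_Li2 {x : ℝ} (hx : |x| < 1) :
    HasDerivAt Li2 (∑' k : ℕ, x ^ k / ((k : ℝ) + 1)) x := by
  have hr : |x| < (|x| + 1) / 2 := by linarith
  have hsum : Summable fun k : ℕ ↦ |1 / ((k : ℝ) + 1)| * ((|x| + 1) / 2) ^ k := by
    refine (summable_geometric_of_lt_one (r := (|x| + 1) / 2) (by positivity) (by linarith))
      |>.of_nonneg_of_le (fun k ↦ by positivity) fun k ↦ ?_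
    rw [abs_of_pos (by positivity)]
    exact mul_le_of_le_one_left (by positivity) (div_le_one_of_le₀ (by simp) (by positivity))
  convert hasDerivAt_tsum_mul_pow_succ_div hsum hr using 1
  · funext s
    rw [Li2]
    congr 1 with k
    field_simp
  · congr 1 with k
    ring

theorem mul_tsum_pow_div_succ {x : ℝ} (hx : |x| < 1) :
    x * ∑' k : ℕ, x ^ k / ((k : ℝ) + 1) = -log (1 - x) := by
  rw [← tsum_mul_left, ← (hasSum_pow_div_log_of_abs_lt_one hx).tsum_eq]
  congr 1 with k
  ring

theorem continuousOn_Li2 : ContinuousOn Li2 (Icc (-1) 1) := by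
  convert continuousOn_tsum_mul_pow_succ_div_sq (a := fun _ ↦ 1) (R := 1) (by simp) using 1
  funext x
  simp [Li2]

theorem summable_pow_mul_centralBinom_mul_pow (n : ℕ) {s : ℝ} (hs : |s| < 1 / 4) :
    Summable fun k : ℕ ↦ (k : ℝ) ^ n * k.centralBinom * s ^ k := by
  have h4s : ‖4 * |s|‖ < 1 := by
    rw [norm_mul, Real.norm_of_nonneg (abs_nonneg s)]
    norm_num
    linarith
  refine (summable_pow_mul_geometric_of_norm_lt_one n h4s).of_norm_bounded fun k ↦ ?_
  simp only [norm_mul, norm_pow, Real.norm_eq_abs, Nat.abs_cast, mul_pow, ← mul_assoc]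
  gcongr
  exact_mod_cast k.centralBinom_le_four_pow

theorem hasDerivAt_tsum_mul_pow_succ_div_of_abs_le_centralBinom {a : ℕ → ℝ}
    (ha : ∀ k, |a k| ≤ (k + 1) * (k + 1).centralBinom) {s : ℝ} (hs : |s| < 1 / 4) :
    HasDerivAt (fun s ↦ ∑' k, a k * s ^ (k + 1) / (k + 1)) (∑' k, a k * s ^ k) s := by
  obtain ⟨r, hsr, hr⟩ := exists_between hs
  have hr0 : 0 < r := (abs_nonneg s).trans_lt hsr
  have hsum : Summable fun k : ℕ ↦
      ((k + 1 : ℕ) : ℝ) ^ 1 * (k + 1).centralBinom * r ^ (k + 1) :=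
    (summable_nat_add_iff 1).mpr
      (summable_pow_mul_centralBinom_mul_pow 1 (by rwa [abs_of_pos hr0]))
  refine hasDerivAt_tsum_mul_pow_succ_div ((hsum.mul_left r⁻¹).of_nonneg_of_le
    (fun k ↦ mul_nonneg (abs_nonneg _) (pow_nonneg hr0.le _)) fun k ↦ ?_) hsr
  calc |a k| * r ^ k ≤ (k + 1) * (k + 1).centralBinom * r ^ k := by gcongr; exact ha k
    _ = r⁻¹ * (((k + 1 : ℕ) : ℝ) ^ 1 * (k + 1).centralBinom * r ^ (k + 1)) := by
      field_simp
      push_cast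
      ring

noncomputable def centralBinomSeries (m : ℕ) (s : ℝ) : ℝ :=
  ∑' k : ℕ, ((k + 1).centralBinom : ℝ) * s ^ (k + 1) / ((k : ℝ) + 1) ^ m

noncomputable def centralBinomSeriesDeriv (m : ℕ) (s : ℝ) : ℝ :=
  ∑' k : ℕ, (k + 1) * ((k + 1).centralBinom : ℝ) / ((k : ℝ) + 1) ^ m * s ^ k

theorem hasDerivAt_centralBinomSeries (m : ℕ) {s : ℝ} (hs : |s| < 1 / 4) :
    HasDerivAt (centralBinomSeries m) (centralBinomSeriesDeriv m s) s := by
  have ha (k : ℕ) : |(k + 1) * ((k + 1).centralBinom : ℝ) / ((k : ℝ) + 1) ^ m|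
      ≤ (k + 1) * (k + 1).centralBinom := by
    rw [abs_of_nonneg (by positivity)]
    exact div_le_self (by positivity) (one_le_pow₀ (by simp))
  convert hasDerivAt_tsum_mul_pow_succ_div_of_abs_le_centralBinom ha hs using 1
  · funext s
    refine tsum_congr fun k ↦ ?_
    field_simp
  · rfl

theorem mul_centralBinomSeriesDeriv_succ (m : ℕ) (s : ℝ) :
    s * centralBinomSeriesDeriv (m + 1) s = centralBinomSeries m s := by
  rw [centralBinomSeriesDeriv, centralBinomSeries, ← tsum_mul_left]
  refine tsum_congr fun k ↦ ?_
  field_simp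
  ring

theorem centralBinomSeriesDeriv_apply_zero (m : ℕ) : centralBinomSeriesDeriv m 0 = 2 := by
  rw [centralBinomSeriesDeriv, tsum_eq_single 0 fun k hk ↦ by simp [hk]]
  simp [Nat.centralBinom, Nat.choose]

theorem one_sub_four_mul_centralBinomSeriesDeriv_zero {s : ℝ} (hs : |s| < 1 / 4) :
    (1 - 4 * s) * centralBinomSeriesDeriv 0 s = 2 * (1 + centralBinomSeries 0 s) := by
  have h₁ := summable_pow_mul_centralBinom_mul_pow 1 hs
  have h₀ := summable_pow_mul_centralBinom_mul_pow 0 hs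
  have hrec : centralBinomSeriesDeriv 0 s = 4 * ∑' k : ℕ, (k : ℝ) ^ 1 * k.centralBinom * s ^ k
      + 2 * ∑' k : ℕ, (k : ℝ) ^ 0 * k.centralBinom * s ^ k := by
    rw [centralBinomSeriesDeriv, ← tsum_mul_left, ← tsum_mul_left,
      ← (h₁.mul_left 4).tsum_add (h₀.mul_left 2)]
    refine tsum_congr fun k ↦ ?_
    have := congrArg (Nat.cast : ℕ → ℝ) k.succ_mul_centralBinom_succ
    push_cast at this
    linear_combination s ^ k * this
  have hshift₁ :
      ∑' k : ℕ, (k : ℝ) ^ 1 * k.centralBinom * s ^ k = s * centralBinomSeriesDeriv 0 s := by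
    rw [h₁.tsum_eq_zero_add, centralBinomSeriesDeriv, ← tsum_mul_left]
    simp only [CharP.cast_eq_zero, pow_one, zero_mul, zero_add]
    exact tsum_congr fun k ↦ by push_cast; ring
  have hshift₀ :
      ∑' k : ℕ, (k : ℝ) ^ 0 * k.centralBinom * s ^ k = 1 + centralBinomSeries 0 s := by
    rw [h₀.tsum_eq_zero_add, centralBinomSeries]
    simp
  rw [hshift₁, hshift₀] at hrec
  linear_combination hrec

theorem IsOpen.eq_of_hasDerivAt_eqOn {s : Set ℝ} (hs : IsOpen s) (hs' : IsPreconnected s)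
    {f g f' g' : ℝ → ℝ} (hf : ∀ y ∈ s, HasDerivAt f (f' y) y)
    (hg : ∀ y ∈ s, HasDerivAt g (g' y) y) (hfg : EqOn f' g' s) {x₀ x : ℝ} (hx₀ : x₀ ∈ s)
    (h₀ : f x₀ = g x₀) (hx : x ∈ s) : f x = g x :=
  hs.eqOn_of_deriv_eq hs' (fun y hy ↦ (hf y hy).differentiableAt.differentiableWithinAt)
    (fun y hy ↦ (hg y hy).differentiableAt.differentiableWithinAt)
    (fun y hy ↦ by rw [(hf y hy).deriv, (hg y hy).deriv, hfg hy]) hx₀ h₀ hx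

theorem HasDerivAt.comp_mul_one_sub {S : ℝ → ℝ} {S' y : ℝ}
    (hS : HasDerivAt S S' (y * (1 - y))) :
    HasDerivAt (fun y ↦ S (y * (1 - y))) (S' * (1 - 2 * y)) y := by
  refine hS.comp y (((hasDerivAt_id y).mul ((hasDerivAt_id y).const_sub 1)).congr_deriv ?_)
  simp only [id]
  ring

/-- `x ↦ x (1 - x)` maps this interval bijectively onto `(-1/4, 1/4)`, with inverse
`t ↦ (1 - √(1 - 4t)) / 2`. -/
def branchInterval : Set ℝ := Ioo ((1 - √2) / 2) (1 / 2)

namespace branchInterval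

theorem zero_mem : (0 : ℝ) ∈ branchInterval :=
  ⟨by linarith [one_lt_sqrt_two], by norm_num⟩

theorem abs_mul_one_sub_lt {x : ℝ} (hx : x ∈ branchInterval) : |x * (1 - x)| < 1 / 4 := by
  obtain ⟨h₁, h₂⟩ := hx
  rw [abs_lt]
  constructor <;> nlinarith [sq_sqrt (zero_le_two (α := ℝ)), sqrt_nonneg 2]

theorem abs_lt_one {x : ℝ} (hx : x ∈ branchInterval) : |x| < 1 :=
  abs_lt.mpr ⟨by linarith [hx.1, sqrt_two_lt_three_halves], by linarith [hx.2]⟩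

theorem eq_of_hasDerivAt_eqOn {f g f' g' : ℝ → ℝ}
    (hf : ∀ y ∈ branchInterval, HasDerivAt f (f' y) y)
    (hg : ∀ y ∈ branchInterval, HasDerivAt g (g' y) y) (hfg : EqOn f' g' branchInterval)
    (h₀ : f 0 = g 0) {x : ℝ} (hx : x ∈ branchInterval) : f x = g x :=
  isOpen_Ioo.eq_of_hasDerivAt_eqOn isPreconnected_Ioo hf hg hfg zero_mem h₀ hx

end branchInterval

theorem hasDerivAt_centralBinomSeries_mul_one_sub {m : ℕ} {y : ℝ} (hy : y ∈ branchInterval) :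
    HasDerivAt (fun y ↦ centralBinomSeries m (y * (1 - y)))
      (centralBinomSeriesDeriv m (y * (1 - y)) * (1 - 2 * y)) y :=
  (hasDerivAt_centralBinomSeries m (branchInterval.abs_mul_one_sub_lt hy)).comp_mul_one_sub

theorem one_add_centralBinomSeries_zero_mul_one_sub_two_mul {x : ℝ} (hx : x ∈ branchInterval) :
    (1 + centralBinomSeries 0 (x * (1 - x))) * (1 - 2 * x) = 1 := by
  refine branchInterval.eq_of_hasDerivAt_eqOn (g := fun _ ↦ 1) (fun y hy ↦
    ((hasDerivAt_centralBinomSeries_mul_one_sub hy).const_add 1).mul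
      (((hasDerivAt_id' y).const_mul 2).const_sub 1))
    (fun y _ ↦ hasDerivAt_const y 1) (fun y hy ↦ ?_) (by simp [centralBinomSeries]) hx
  have := one_sub_four_mul_centralBinomSeriesDeriv_zero (branchInterval.abs_mul_one_sub_lt hy)
  simp only [mul_one]
  linear_combination this

theorem centralBinomSeries_one_mul_one_sub {x : ℝ} (hx : x ∈ branchInterval) :
    centralBinomSeries 1 (x * (1 - x)) = -2 * log (1 - x) := by
  refine branchInterval.eq_of_hasDerivAt_eqOn
    (fun y hy ↦ hasDerivAt_centralBinomSeries_mul_one_sub hy)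
    (fun y hy ↦ ((((hasDerivAt_id' y).const_sub 1).log (by linarith [hy.2])).const_mul (-2)))
    (fun y hy ↦ ?_) (by simp [centralBinomSeries]) hx
  have hy1 : 0 < 1 - y := by linarith [hy.2]
  beta_reduce
  -- at `y = 0` the derivative is read off the series; elsewhere it is `S₀ / (y (1 - y))`
  rcases eq_or_ne y 0 with rfl | hy0
  · norm_num [centralBinomSeriesDeriv_apply_zero]
  have h0 := one_add_centralBinomSeries_zero_mul_one_sub_two_mul hy
  rw [← mul_centralBinomSeriesDeriv_succ, zero_add] at h0
  field_simp
  apply mul_left_cancel₀ hy0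
  linear_combination h0

theorem centralBinomSeries_two_mul_one_sub {x : ℝ} (hx : x ∈ branchInterval) :
    centralBinomSeries 2 (x * (1 - x)) = 2 * Li2 x - log (1 - x) ^ 2 := by
  refine branchInterval.eq_of_hasDerivAt_eqOn
    (fun y hy ↦ hasDerivAt_centralBinomSeries_mul_one_sub hy)
    (fun y hy ↦ ((hasDerivAt_Li2 (branchInterval.abs_lt_one hy)).const_mul 2).sub
      ((((hasDerivAt_id' y).const_sub 1).log (by linarith [hy.2])).pow 2))
    (fun y hy ↦ ?_) (by simp [centralBinomSeries, Li2]) hx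
  have hy1 : 0 < 1 - y := by linarith [hy.2]
  beta_reduce
  rcases eq_or_ne y 0 with rfl | hy0
  · norm_num [centralBinomSeriesDeriv_apply_zero]
    rw [tsum_eq_single 0 fun k hk ↦ by simp [hk]]
    simp
  have h1 := centralBinomSeries_one_mul_one_sub hy
  rw [← mul_centralBinomSeriesDeriv_succ, one_add_one_eq_two] at h1
  have hL := mul_tsum_pow_div_succ (branchInterval.abs_lt_one hy)
  field_simp
  apply mul_left_cancel₀ hy0
  linear_combination (1 - 2 * y) * h1 - 2 * (1 - y) * hL

theorem continuousOn_centralBinomSeries_two :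
    ContinuousOn (centralBinomSeries 2) (Icc (-(1 / 4)) (1 / 4)) :=
  continuousOn_tsum_mul_pow_succ_div_sq fun k ↦ by
    rw [Nat.abs_cast, ← le_div_iff₀ (by positivity), one_div_pow, one_div_one_div]
    exact_mod_cast (k + 1).centralBinom_le_four_pow

theorem centralBinomSeries_two_mul_one_sub_of_mem_Icc {x : ℝ}
    (hx : x ∈ Icc ((1 - √2) / 2) (1 / 2)) :
    centralBinomSeries 2 (x * (1 - x)) = 2 * Li2 x - log (1 - x) ^ 2 := by
  have hsqrt := sq_sqrt (zero_le_two (α := ℝ))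
  have hcl : Icc ((1 - √2) / 2) (1 / 2) ⊆ closure branchInterval := by
    rw [branchInterval, closure_Ioo (by linarith [one_lt_sqrt_two])]
  have hmaps : MapsTo (fun y ↦ y * (1 - y)) (Icc ((1 - √2) / 2) (1 / 2))
      (Icc (-(1 / 4)) (1 / 4)) := fun y hy ↦
    ⟨by nlinarith [hy.1, hy.2, sqrt_nonneg 2], by nlinarith [hy.1, hy.2]⟩
  have hLi2 : Icc ((1 - √2) / 2) (1 / 2) ⊆ Icc (-1) 1 :=
    Icc_subset_Icc (by linarith [sqrt_two_lt_three_halves]) (by norm_num)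
  refine EqOn.of_subset_closure (fun y hy ↦ centralBinomSeries_two_mul_one_sub hy)
    (continuousOn_centralBinomSeries_two.comp (by fun_prop) hmaps)
    (((continuousOn_Li2.mono hLi2).const_mul 2).sub ((ContinuousOn.log (by fun_prop)
      fun y hy ↦ (by linarith [hy.2] : (0 : ℝ) < 1 - y).ne').pow 2))
    Ioo_subset_Icc_self hcl hx

theorem centralBinom_dilog (t : ℝ) (ht : |t| ≤ 1/4) :
    ∑' k : ℕ, (Nat.centralBinom (k + 1) : ℝ) * t ^ (k + 1) / ((k : ℝ) + 1) ^ 2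
      = 2 * Li2 ((1 - Real.sqrt (1 - 4 * t)) / 2)
        - (Real.log ((1 + Real.sqrt (1 - 4 * t)) / 2)) ^ 2 := by
  obtain ⟨ht₁, ht₂⟩ := abs_le.mp ht
  have hsq : √(1 - 4 * t) ^ 2 = 1 - 4 * t := sq_sqrt (by linarith)
  set x := (1 - √(1 - 4 * t)) / 2 with hx_def
  have hxt : x * (1 - x) = t := by rw [hx_def]; linear_combination -hsq / 4
  have h1x : 1 - x = (1 + √(1 - 4 * t)) / 2 := by rw [hx_def]; ring
  have hx : x ∈ Icc ((1 - √2) / 2) (1 / 2) := by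
    have := sqrt_le_sqrt (show 1 - 4 * t ≤ 2 by linarith)
    have := sqrt_nonneg (1 - 4 * t)
    constructor <;> linarith
  have h := centralBinomSeries_two_mul_one_sub_of_mem_Icc hx
  rwa [hxt, h1x] at h
end

section
/- ∑_{k≥1} C(2k,k) / (k² 4^k) = ζ(2) - 2(log 2)², where C(2k,k) is the central binomial coefficient. -/
/-!
Write `c n = C(2n, n) / 4 ^ n`. The binomial series gives `∑ c n x ^ n = (1 - x) ^ (-1/2)`, and
`∫₀¹ x ^ k (-log x) dx = 1 / (k + 1) ^ 2`, so the sum equals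
`∫₀¹ -log x ((1 - x) ^ (-1/2) - 1) / x dx`. The substitution `x = v (2 - v)` turns this into
`2 ∫₀¹ -log v / (2 - v) dv - 2 ∫₀¹ log (2 - v) / (2 - v) dv = 2 Li₂(1/2) - log² 2`, the first
integral by expanding `1 / (2 - v)` geometrically.
Euler's reflection `2 Li₂(1/2) + log² 2 = ζ(2)` comes from `Li₂ z = ∫₀^z -log (1 - t) / t dt`:
split `ζ(2) = Li₂ 1` at `1/2`, reflect the upper half and integrate by parts against
`log t log (1 - t)`.
-/

open Real MeasureTheory Set Filter intervalIntegral Asymptotics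
open scoped Topology

section SeriesOfNonnegFunctions

variable {α : Type*} [MeasurableSpace α] {μ : Measure α} {f : ℕ → α → ℝ} {g : α → ℝ}

theorem hasSum_integral_of_nonneg (hf : ∀ n, Integrable (f n) μ) (hf0 : ∀ n, 0 ≤ᵐ[μ] f n)
    (hsum : Summable fun n ↦ ∫ x, f n x ∂μ) (hg : ∀ᵐ x ∂μ, HasSum (fun n ↦ f n x) (g x)) :
    HasSum (fun n ↦ ∫ x, f n x ∂μ) (∫ x, g x ∂μ) := by
  have hnorm n : ∫ x, ‖f n x‖ ∂μ = ∫ x, f n x ∂μ :=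
    integral_congr_ae ((hf0 n).mono fun x hx ↦ Real.norm_of_nonneg hx)
  rw [integral_congr_ae (hg.mono fun x hx ↦ hx.tsum_eq.symm)]
  exact hasSum_integral_of_summable_integral_norm hf (by simpa only [hnorm] using hsum)

theorem integrable_of_hasSum_of_nonneg (hf : ∀ n, Integrable (f n) μ) (hf0 : ∀ n, 0 ≤ᵐ[μ] f n)
    (hsum : Summable fun n ↦ ∫ x, f n x ∂μ) (hg : ∀ᵐ x ∂μ, HasSum (fun n ↦ f n x) (g x)) :
    Integrable g μ := by
  have hmeas : AEStronglyMeasurable g μ :=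
    aestronglyMeasurable_of_tendsto_ae atTop
      (fun n ↦ Finset.aestronglyMeasurable_fun_sum _ fun i _ ↦ (hf i).1)
      (hg.mono fun x hx ↦ hx.tendsto_sum_nat)
  have hg' : ∀ᵐ x ∂μ, HasSum (fun n ↦ f n x) (g x) ∧ ∀ n, 0 ≤ f n x :=
    hg.and (ae_all_iff.2 hf0)
  refine ⟨hmeas, (hasFiniteIntegral_iff_ofReal (hg'.mono fun x hx ↦ hx.1.nonneg hx.2)).2 ?_⟩
  calc ∫⁻ x, ENNReal.ofReal (g x) ∂μ = ∫⁻ x, ∑' n, ENNReal.ofReal (f n x) ∂μ :=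
        lintegral_congr_ae <| hg'.mono fun x hx ↦ by
          simp only [← hx.1.tsum_eq, ENNReal.ofReal_tsum_of_nonneg hx.2 hx.1.summable]
    _ = ∑' n, ENNReal.ofReal (∫ x, f n x ∂μ) := by
        rw [lintegral_tsum fun n ↦ (hf n).1.aemeasurable.ennreal_ofReal]
        exact tsum_congr fun n ↦ (ofReal_integral_eq_lintegral_ofReal (hf n) (hf0 n)).symm
    _ < ⊤ := by
        rw [← ENNReal.ofReal_tsum_of_nonneg (fun n ↦ integral_nonneg_of_ae (hf0 n)) hsum]
        exact ENNReal.ofReal_lt_top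

end SeriesOfNonnegFunctions

theorem factorial_mul_centralBinom_div_four_pow (n : ℕ) :
    (n.factorial : ℝ) * ((n.centralBinom : ℝ) / 4 ^ n) = (ascPochhammer ℝ n).eval (1 / 2) := by
  induction n with
  | zero => simp
  | succ n ih =>
    have h : ((n : ℝ) + 1) * (n + 1).centralBinom = 2 * (2 * n + 1) * n.centralBinom := by
      exact_mod_cast Nat.succ_mul_centralBinom_succ n
    rw [ascPochhammer_succ_eval, ← ih, Nat.factorial_succ]
    push_cast
    rw [pow_succ]
    field_simp
    linear_combination 2 * h

theorem centralBinom_div_four_pow_eq_multichoose (n : ℕ) :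
    (n.centralBinom : ℝ) / 4 ^ n = Ring.multichoose (1 / 2 : ℝ) n := by
  have h := Ring.factorial_nsmul_multichoose_eq_ascPochhammer (1 / 2 : ℝ) n
  rw [Polynomial.ascPochhammer_smeval_eq_eval, ← factorial_mul_centralBinom_div_four_pow,
    nsmul_eq_mul] at h
  exact mul_left_cancel₀ (by positivity) h.symm

theorem hasSum_centralBinom_div_four_pow_mul_pow {x : ℝ} (hx : |x| < 1) :
    HasSum (fun n ↦ (n.centralBinom : ℝ) / 4 ^ n * x ^ n) (1 / √(1 - x)) := by
  have h := (one_div_one_sub_rpow_hasFPowerSeriesOnBall_zero (1 / 2)).hasSum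
    (y := x) (by simpa [edist_dist, Real.dist_eq] using hx)
  simp only [FormalMultilinearSeries.ofScalars_apply_eq, ← Ring.multichoose_eq,
    ← centralBinom_div_four_pow_eq_multichoose, smul_eq_mul, zero_add] at h
  rwa [← Real.sqrt_eq_rpow] at h

theorem hasSum_centralBinom_succ_div_four_pow_mul_pow {x : ℝ} (hx₀ : x ≠ 0) (hx : |x| < 1) :
    HasSum (fun k ↦ ((k + 1).centralBinom : ℝ) / 4 ^ (k + 1) * x ^ k)
      ((1 / √(1 - x) - 1) / x) := by
  have h := ((hasSum_nat_add_iff' 1).2 (hasSum_centralBinom_div_four_pow_mul_pow hx)).div_const x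
  simp only [Finset.sum_range_one, Nat.centralBinom_zero, Nat.cast_one, pow_zero, div_one,
    mul_one] at h
  exact h.congr_fun fun k ↦ by field_simp; ring

theorem hasDerivAt_pow_mul_log_primitive (n : ℕ) {x : ℝ} (hx : x ≠ 0) :
    HasDerivAt (fun x ↦ x ^ (n + 1) * (1 / (n + 1) - log x) / (n + 1)) (x ^ n * -log x) x := by
  refine ((hasDerivAt_pow (n + 1) x).mul ((hasDerivAt_const x (1 / ((n : ℝ) + 1))).sub
    (hasDerivAt_log hx))).div_const ((n : ℝ) + 1) |>.congr_deriv ?_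
  simp only [Pi.sub_apply, Nat.add_sub_cancel]
  field_simp
  push_cast
  ring

theorem continuous_pow_mul_log_primitive (n : ℕ) :
    Continuous fun x : ℝ ↦ x ^ (n + 1) * (1 / (n + 1) - log x) / (n + 1) := by
  -- at `x = 0` this relies on the convention `log 0 = 0`, which makes `x * log x` continuous
  have h : Continuous fun x : ℝ ↦ x ^ n * (x * log x) := by
    have := continuous_mul_log; fun_prop
  convert ((continuous_pow (n + 1)).div_const ((n : ℝ) + 1) |>.sub h).div_const ((n : ℝ) + 1)
    using 1
  ext x
  simp only [Pi.sub_apply]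
  ring

theorem integrableOn_pow_mul_neg_log (n : ℕ) :
    IntegrableOn (fun x ↦ x ^ n * -log x) (Ioo 0 1) :=
  (integrableOn_deriv_of_nonneg (continuous_pow_mul_log_primitive n).continuousOn
    (fun _ hx ↦ hasDerivAt_pow_mul_log_primitive n hx.1.ne')
    fun _ hx ↦ mul_nonneg (pow_nonneg hx.1.le n)
      (neg_nonneg.2 (log_nonpos hx.1.le hx.2.le))).mono_set Ioo_subset_Ioc_self

theorem integral_pow_mul_neg_log (n : ℕ) :
    ∫ x in Ioo 0 1, x ^ n * -log x = 1 / (n + 1) ^ 2 := by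
  rw [← integral_Ioc_eq_integral_Ioo, ← integral_of_le zero_le_one,
    integral_eq_sub_of_hasDerivAt_of_le zero_le_one
      (continuous_pow_mul_log_primitive n).continuousOn
      (fun _ hx ↦ hasDerivAt_pow_mul_log_primitive n hx.1.ne')
      ((intervalIntegrable_iff_integrableOn_Ioo_of_le zero_le_one).2
        (integrableOn_pow_mul_neg_log n))]
  field_simp
  simp

/-- The dilogarithm `Li₂`; the series only converges for `|z| ≤ 1`. -/
noncomputable def dilog (z : ℝ) : ℝ := ∑' n : ℕ, z ^ (n + 1) / (n + 1) ^ 2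

theorem summable_one_div_succ_sq : Summable fun n : ℕ ↦ 1 / ((n : ℝ) + 1) ^ 2 := by
  exact_mod_cast (summable_nat_add_iff 1).2 (summable_one_div_nat_pow.2 one_lt_two)

theorem hasSum_dilog {z : ℝ} (hz : |z| ≤ 1) :
    HasSum (fun n : ℕ ↦ z ^ (n + 1) / (n + 1) ^ 2) (dilog z) := by
  refine (Summable.of_norm_bounded summable_one_div_succ_sq fun n ↦ ?_).hasSum
  rw [norm_div, norm_pow, Real.norm_eq_abs, Real.norm_of_nonneg (by positivity)]
  exact div_le_div_of_nonneg_right (pow_le_one₀ (abs_nonneg z) hz) (by positivity)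

theorem dilog_one : dilog 1 = π ^ 2 / 6 := by
  have h := (hasSum_nat_add_iff' 1).2 hasSum_zeta_two
  norm_num at h
  exact (hasSum_dilog (by simp)).unique (by simpa using h)

theorem integrableOn_and_integral_neg_log_mul_div_one_sub_mul {z : ℝ} (hz₀ : 0 ≤ z)
    (hz₁ : z ≤ 1) :
    IntegrableOn (fun x ↦ -log x * z / (1 - z * x)) (Ioo 0 1) ∧
      ∫ x in Ioo 0 1, -log x * z / (1 - z * x) = dilog z := by
  have hf (n : ℕ) :
      Integrable (fun x ↦ z ^ (n + 1) * (x ^ n * -log x)) (volume.restrict (Ioo 0 1)) :=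
    (integrableOn_pow_mul_neg_log n).const_mul _
  have hf0 (n : ℕ) :
      0 ≤ᵐ[volume.restrict (Ioo 0 1)] fun x ↦ z ^ (n + 1) * (x ^ n * -log x) := by
    filter_upwards [ae_restrict_mem measurableSet_Ioo] with x hx
    exact mul_nonneg (pow_nonneg hz₀ _)
      (mul_nonneg (pow_nonneg hx.1.le n) (neg_nonneg.2 (log_nonpos hx.1.le hx.2.le)))
  have hint : HasSum (fun n ↦ ∫ x in Ioo 0 1, z ^ (n + 1) * (x ^ n * -log x)) (dilog z) := by
    simpa only [MeasureTheory.integral_const_mul, integral_pow_mul_neg_log, mul_one_div] using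
      hasSum_dilog (abs_le.2 ⟨by linarith, hz₁⟩)
  have hg : ∀ᵐ x ∂volume.restrict (Ioo (0 : ℝ) 1),
      HasSum (fun n ↦ z ^ (n + 1) * (x ^ n * -log x)) (-log x * z / (1 - z * x)) := by
    filter_upwards [ae_restrict_mem measurableSet_Ioo] with x hx
    have h := (hasSum_geometric_of_lt_one (mul_nonneg hz₀ hx.1.le)
      (by nlinarith [hx.1, hx.2])).mul_left (z * -log x)
    rw [show -log x * z / (1 - z * x) = z * -log x * (1 - z * x)⁻¹ by ring]
    exact h.congr_fun fun n ↦ by ring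
  exact ⟨integrable_of_hasSum_of_nonneg hf hf0 hint.summable hg,
    (hasSum_integral_of_nonneg hf hf0 hint.summable hg).unique hint⟩

theorem integrableOn_and_integral_neg_log_one_sub_div {z : ℝ} (hz₀ : 0 ≤ z) (hz₁ : z ≤ 1) :
    IntegrableOn (fun t ↦ -log (1 - t) / t) (Ioo 0 z) ∧
      ∫ t in Ioo 0 z, -log (1 - t) / t = dilog z := by
  have hf (n : ℕ) : Integrable (fun t : ℝ ↦ t ^ n / (n + 1)) (volume.restrict (Ioo 0 z)) :=
    (continuous_pow n |>.div_const _).integrableOn_Icc.mono_set Ioo_subset_Icc_self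
  have hf0 (n : ℕ) : 0 ≤ᵐ[volume.restrict (Ioo 0 z)] fun t : ℝ ↦ t ^ n / (n + 1) := by
    filter_upwards [ae_restrict_mem measurableSet_Ioo] with t ht
    exact div_nonneg (pow_nonneg ht.1.le n) (by positivity)
  have hint : HasSum (fun n : ℕ ↦ ∫ t in Ioo 0 z, t ^ n / (n + 1)) (dilog z) := by
    convert hasSum_dilog (abs_le.2 ⟨by linarith, hz₁⟩) using 2 with n
    rw [← integral_Ioc_eq_integral_Ioo, ← integral_of_le hz₀, intervalIntegral.integral_div,
      integral_pow]
    simp [sq, div_div]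
  have hg : ∀ᵐ t : ℝ ∂volume.restrict (Ioo 0 z),
      HasSum (fun n : ℕ ↦ t ^ n / (n + 1)) (-log (1 - t) / t) := by
    filter_upwards [ae_restrict_mem measurableSet_Ioo] with t ht
    have h := (hasSum_pow_div_log_of_abs_lt_one (x := t)
      (abs_lt.2 ⟨by linarith [ht.1], by linarith [ht.2]⟩)).div_const t
    exact h.congr_fun fun n ↦ by field_simp [ht.1.ne']; ring
  exact ⟨integrable_of_hasSum_of_nonneg hf hf0 hint.summable hg,
    (hasSum_integral_of_nonneg hf hf0 hint.summable hg).unique hint⟩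

theorem intervalIntegrable_neg_log_one_sub_div {a b : ℝ} (ha : a ∈ Icc (0 : ℝ) 1)
    (hb : b ∈ Icc (0 : ℝ) 1) : IntervalIntegrable (fun t ↦ -log (1 - t) / t) volume a b := by
  rw [← uIcc_of_le zero_le_one] at ha hb
  exact ((intervalIntegrable_iff_integrableOn_Ioo_of_le zero_le_one).2
    (integrableOn_and_integral_neg_log_one_sub_div zero_le_one le_rfl).1).mono_set
    (uIcc_subset_uIcc ha hb)

theorem intervalIntegral_neg_log_one_sub_div {z : ℝ} (hz₀ : 0 ≤ z) (hz₁ : z ≤ 1) :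
    ∫ t in 0..z, -log (1 - t) / t = dilog z := by
  rw [integral_of_le hz₀, integral_Ioc_eq_integral_Ioo,
    (integrableOn_and_integral_neg_log_one_sub_div hz₀ hz₁).2]

theorem tendsto_log_mul_log_one_sub :
    Tendsto (fun t ↦ log t * log (1 - t)) (𝓝[>] 0) (𝓝 0) := by
  have hlog : (fun t ↦ log (1 - t)) =O[𝓝 0] fun t ↦ t := by
    simpa using (((hasDerivAt_id (0 : ℝ)).const_sub 1).log (by norm_num)).isBigO_sub
  have hmul : Tendsto (fun t ↦ log t * t) (𝓝 0) (𝓝 0) := by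
    simpa [mul_comm] using continuous_mul_log.tendsto 0
  exact ((isBigO_refl log _).mul hlog).mono nhdsWithin_le_nhds |>.trans_tendsto
    (hmul.mono_left nhdsWithin_le_nhds)

theorem integral_neg_log_div_one_sub_zero_half :
    ∫ t in (0 : ℝ)..1 / 2, -log t / (1 - t) = log 2 ^ 2 + dilog (1 / 2) := by
  have hg : IntervalIntegrable (fun t ↦ -log (1 - t) / t) volume 0 (1 / 2) :=
    intervalIntegrable_neg_log_one_sub_div (by norm_num) (by norm_num)
  have hh : IntervalIntegrable (fun t ↦ -log t / (1 - t)) volume 0 (1 / 2) := by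
    have h := (intervalIntegrable_neg_log_one_sub_div (a := 1 / 2) (b := 1) (by norm_num)
      (by norm_num)).comp_sub_left 1
    norm_num at h
    exact h.symm
  have hderiv : ∀ t ∈ Ioo (0 : ℝ) (1 / 2), HasDerivAt (fun t ↦ log t * log (1 - t))
      (-log t / (1 - t) - -log (1 - t) / t) t := by
    intro t ht
    have h1 : 1 - t ≠ 0 := by linarith [ht.2]
    refine ((hasDerivAt_log ht.1.ne').mul
      (((hasDerivAt_id t).const_sub 1).log h1)).congr_deriv ?_
    simp only [id]
    field_simp
    ring
  have hhalf : Tendsto (fun t ↦ log t * log (1 - t)) (𝓝[<] (1 / 2)) (𝓝 (log 2 ^ 2)) := by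
    have h : ContinuousAt (fun t ↦ log t * log (1 - t)) (1 / 2) :=
      (continuousAt_log (by norm_num)).mul ((continuousAt_log (by norm_num)).comp
        (continuousAt_const.sub continuousAt_id))
    convert h.tendsto.mono_left nhdsWithin_le_nhds using 2
    rw [one_div, log_inv, show (1 : ℝ) - 2⁻¹ = 2⁻¹ by norm_num, log_inv]
    ring
  have h := integral_eq_sub_of_hasDerivAt_of_tendsto (by norm_num) hderiv (hh.sub hg)
    tendsto_log_mul_log_one_sub hhalf
  rw [integral_sub hh hg, intervalIntegral_neg_log_one_sub_div (by norm_num) (by norm_num)] at h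
  linarith

theorem two_mul_dilog_half_add_log_two_sq : 2 * dilog (1 / 2) + log 2 ^ 2 = π ^ 2 / 6 := by
  have hrefl : ∫ t in (1 / 2 : ℝ)..1, -log (1 - t) / t =
      ∫ t in (0 : ℝ)..1 / 2, -log t / (1 - t) := by
    have h := integral_comp_sub_left (fun t ↦ -log t / (1 - t)) (a := 1 / 2) (b := 1) 1
    norm_num at h ⊢
    exact h
  have h := integral_add_adjacent_intervals
    (intervalIntegrable_neg_log_one_sub_div (a := 0) (b := 1 / 2) (by norm_num) (by norm_num))
    (intervalIntegrable_neg_log_one_sub_div (a := 1 / 2) (b := 1) (by norm_num) (by norm_num))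
  rw [hrefl, integral_neg_log_div_one_sub_zero_half, intervalIntegral_neg_log_one_sub_div
    (by norm_num) (by norm_num), intervalIntegral_neg_log_one_sub_div zero_le_one le_rfl,
    dilog_one] at h
  linarith

theorem hasSum_centralBinom_succ_div_sq :
    HasSum (fun k : ℕ ↦ ((k + 1).centralBinom : ℝ) / (((k : ℝ) + 1) ^ 2 * 4 ^ (k + 1)))
      (∫ x in Ioo 0 1, -log x * ((1 / √(1 - x) - 1) / x)) := by
  set c : ℕ → ℝ := fun k ↦ ((k + 1).centralBinom : ℝ) / 4 ^ (k + 1)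
  have hc₀ k : 0 ≤ c k := by positivity
  have hc₁ k : c k ≤ 1 :=
    div_le_one_of_le₀ (by exact_mod_cast Nat.centralBinom_le_four_pow _) (by positivity)
  have hf (k : ℕ) : Integrable (fun x ↦ c k * (x ^ k * -log x)) (volume.restrict (Ioo 0 1)) :=
    (integrableOn_pow_mul_neg_log k).const_mul _
  have hf0 (k : ℕ) : 0 ≤ᵐ[volume.restrict (Ioo 0 1)] fun x ↦ c k * (x ^ k * -log x) := by
    filter_upwards [ae_restrict_mem measurableSet_Ioo] with x hx
    exact mul_nonneg (hc₀ k)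
      (mul_nonneg (pow_nonneg hx.1.le k) (neg_nonneg.2 (log_nonpos hx.1.le hx.2.le)))
  have hint (k : ℕ) : ∫ x in Ioo 0 1, c k * (x ^ k * -log x) = c k / ((k : ℝ) + 1) ^ 2 := by
    rw [MeasureTheory.integral_const_mul, integral_pow_mul_neg_log, mul_one_div]
  have hsum : Summable fun k ↦ ∫ x in Ioo 0 1, c k * (x ^ k * -log x) := by
    simp only [hint]
    exact Summable.of_nonneg_of_le (fun k ↦ div_nonneg (hc₀ k) (by positivity))
      (fun k ↦ div_le_div_of_nonneg_right (hc₁ k) (by positivity)) summable_one_div_succ_sq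
  have hg : ∀ᵐ x ∂volume.restrict (Ioo (0 : ℝ) 1),
      HasSum (fun k ↦ c k * (x ^ k * -log x)) (-log x * ((1 / √(1 - x) - 1) / x)) := by
    filter_upwards [ae_restrict_mem measurableSet_Ioo] with x hx
    have h := (hasSum_centralBinom_succ_div_four_pow_mul_pow hx.1.ne'
      (abs_lt.2 ⟨by linarith [hx.1], hx.2⟩)).mul_left (-log x)
    exact h.congr_fun fun k ↦ by ring
  refine (hasSum_integral_of_nonneg hf hf0 hsum hg).congr_fun fun k ↦ ?_
  rw [hint, div_div, mul_comm (4 ^ (k + 1) : ℝ)]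

theorem image_mul_two_sub_Ioo : (fun v : ℝ ↦ v * (2 - v)) '' Ioo 0 1 = Ioo 0 1 := by
  ext y
  constructor
  · rintro ⟨v, hv, rfl⟩
    constructor <;> nlinarith [hv.1, hv.2]
  · intro hy
    have hs : √(1 - y) < 1 := (sqrt_lt' one_pos).2 (by linarith [hy.1])
    have hs0 : 0 < √(1 - y) := sqrt_pos.2 (by linarith [hy.2])
    refine ⟨1 - √(1 - y), ⟨by linarith, by linarith⟩, ?_⟩
    have := sq_sqrt (show 0 ≤ 1 - y by linarith [hy.2])
    nlinarith

theorem setIntegral_Ioo_eq_comp_mul_two_sub (g : ℝ → ℝ) :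
    ∫ x in Ioo 0 1, g x = ∫ v in Ioo 0 1, (2 - 2 * v) * g (v * (2 - v)) := by
  have hderiv : ∀ v ∈ Ioo (0 : ℝ) 1,
      HasDerivWithinAt (fun v ↦ v * (2 - v)) (2 - 2 * v) (Ioo 0 1) v := fun v _ ↦ by
    refine ((hasDerivAt_id v).mul ((hasDerivAt_id v).const_sub 2)).hasDerivWithinAt.congr_deriv ?_
    simp only [id]
    ring
  have hinj : InjOn (fun v : ℝ ↦ v * (2 - v)) (Ioo 0 1) := fun v hv w hw h ↦ by
    simp only at h
    nlinarith [hv.2, hw.2]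
  have h := integral_image_eq_integral_abs_deriv_smul measurableSet_Ioo hderiv hinj g
  rw [image_mul_two_sub_Ioo] at h
  rw [h]
  refine setIntegral_congr_fun measurableSet_Ioo fun v hv ↦ ?_
  simp only [smul_eq_mul, abs_of_pos (show 0 < 2 - 2 * v by linarith [hv.2])]

theorem continuousOn_log_two_sub_div_two_sub :
    ContinuousOn (fun v ↦ log (2 - v) / (2 - v)) (Icc 0 1) := by
  have h : ∀ v ∈ Icc (0 : ℝ) 1, 2 - v ≠ 0 := fun v hv ↦ by linarith [hv.2]
  exact ((continuousOn_const.sub continuousOn_id).log h).div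
    (continuousOn_const.sub continuousOn_id) h

theorem integral_log_two_sub_div_two_sub :
    ∫ v in Ioo 0 1, log (2 - v) / (2 - v) = log 2 ^ 2 / 2 := by
  have hderiv : ∀ v ∈ uIcc (0 : ℝ) 1,
      HasDerivAt (fun v ↦ -log (2 - v) ^ 2 / 2) (log (2 - v) / (2 - v)) v := by
    intro v hv
    rw [uIcc_of_le zero_le_one] at hv
    have h2v : 2 - v ≠ 0 := by linarith [hv.2]
    refine ((((hasDerivAt_id v).const_sub 2).log h2v).pow 2).neg.div_const 2 |>.congr_deriv ?_
    simp only [id]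
    field_simp
    ring
  have hint : IntervalIntegrable (fun v ↦ log (2 - v) / (2 - v)) volume 0 1 :=
    (uIcc_of_le (zero_le_one' ℝ) ▸ continuousOn_log_two_sub_div_two_sub).intervalIntegrable
  rw [← integral_Ioc_eq_integral_Ioo, ← integral_of_le zero_le_one,
    integral_eq_sub_of_hasDerivAt hderiv hint]
  norm_num
  ring

theorem integral_neg_log_mul_one_div_sqrt_one_sub_sub_one_div :
    ∫ x in Ioo 0 1, -log x * ((1 / √(1 - x) - 1) / x) = 2 * dilog (1 / 2) - log 2 ^ 2 := by
  have hsubst : ∀ v ∈ Ioo (0 : ℝ) 1,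
      (2 - 2 * v) * (-log (v * (2 - v)) * ((1 / √(1 - v * (2 - v)) - 1) / (v * (2 - v)))) =
        2 * (-log v * (1 / 2) / (1 - 1 / 2 * v)) - 2 * (log (2 - v) / (2 - v)) := by
    intro v hv
    have hsqrt : √(1 - v * (2 - v)) = 1 - v := by
      rw [show 1 - v * (2 - v) = (1 - v) ^ 2 by ring, sqrt_sq (by linarith [hv.2])]
    have h1v : 1 - v ≠ 0 := by linarith [hv.2]
    have h2v : 2 - v ≠ 0 := by linarith [hv.2]
    rw [hsqrt, log_mul hv.1.ne' h2v]
    field_simp [hv.1.ne']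
    ring
  obtain ⟨hA, hA'⟩ := integrableOn_and_integral_neg_log_mul_div_one_sub_mul
    (z := 1 / 2) (by norm_num) (by norm_num)
  have hB : IntegrableOn (fun v ↦ log (2 - v) / (2 - v)) (Ioo 0 1) :=
    continuousOn_log_two_sub_div_two_sub.integrableOn_Icc.mono_set Ioo_subset_Icc_self
  rw [setIntegral_Ioo_eq_comp_mul_two_sub, setIntegral_congr_fun measurableSet_Ioo hsubst,
    integral_sub (hA.const_mul 2) (hB.const_mul 2), MeasureTheory.integral_const_mul,
    MeasureTheory.integral_const_mul, hA', integral_log_two_sub_div_two_sub]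
  ring

theorem centralBinom_sum_quarter :
    ((∑' k : ℕ, (Nat.centralBinom (k + 1) : ℝ) /
        (((k : ℝ) + 1) ^ 2 * 4 ^ (k + 1)) : ℝ) : ℂ)
      = riemannZeta 2 - 2 * (Real.log 2) ^ 2 := by
  have h : ∑' k : ℕ, (Nat.centralBinom (k + 1) : ℝ) / (((k : ℝ) + 1) ^ 2 * 4 ^ (k + 1)) =
      π ^ 2 / 6 - 2 * log 2 ^ 2 := by
    rw [hasSum_centralBinom_succ_div_sq.tsum_eq,
      integral_neg_log_mul_one_div_sqrt_one_sub_sub_one_div, ← two_mul_dilog_half_add_log_two_sq]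
    ring
  rw [h, riemannZeta_two]
  push_cast
  ring
end

section
/- ∑_{l≥0} 1/((2l+1)·C(2l,l)) = 2π√3/9, where C(2l,l) is the central binomial coefficient. -/
/-!
By the Beta integral, `1 / ((2l+1) C(2l,l)) = ∫₀¹ (x(1-x))^l dx`. Since `0 ≤ x(1-x) ≤ 1/4` on
`[0,1]`, the geometric series may be summed under the integral, so the sum equals
`∫₀¹ dx / (x² - x + 1)`, an arctangent integral whose value is `(2/√3)(π/6 + π/6) = 2π√3/9`.
-/

open Real MeasureTheory intervalIntegral Nat Set
open scoped Interval

theorem integral_pow_mul_one_sub_pow (a b : ℕ) :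
    ∫ x in (0:ℝ)..1, x ^ a * (1 - x) ^ b = (a ! : ℝ) * b ! / (a + b + 1)! := by
  have hbeta : Complex.betaIntegral (a + 1) (b + 1) =
      ((∫ x in (0:ℝ)..1, x ^ a * (1 - x) ^ b : ℝ) : ℂ) := by
    rw [Complex.betaIntegral, ← integral_ofReal]
    refine integral_congr fun x _ => ?_
    push_cast
    simp only [add_sub_cancel_right, Complex.cpow_natCast]
  have hGamma := Complex.betaIntegral_eq_Gamma_mul_div (a + 1) (b + 1)
    (by simp only [Complex.add_re, Complex.natCast_re, Complex.one_re]; positivity)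
    (by simp only [Complex.add_re, Complex.natCast_re, Complex.one_re]; positivity)
  rw [hbeta, show (a + 1 : ℂ) + (b + 1) = ((a + b + 1 : ℕ) : ℂ) + 1 by push_cast; ring,
    Complex.Gamma_nat_eq_factorial, Complex.Gamma_nat_eq_factorial,
    Complex.Gamma_nat_eq_factorial] at hGamma
  apply Complex.ofReal_injective
  simpa using hGamma

theorem integral_pow_mul_one_sub_pow_eq_one_div_choose (a b : ℕ) :
    ∫ x in (0:ℝ)..1, x ^ a * (1 - x) ^ b = 1 / ((a + b + 1) * (a + b).choose a) := by
  rw [integral_pow_mul_one_sub_pow, factorial_succ, choose_symm_add,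
    ← add_choose_mul_factorial_mul_factorial]
  push_cast
  field_simp

theorem hasSum_intervalIntegral_pow {μ : Measure ℝ} [IsLocallyFiniteMeasure μ] {f : ℝ → ℝ}
    {a b r : ℝ} (hf : AEStronglyMeasurable f (μ.restrict (Ι a b))) (hr : r < 1)
    (hfr : ∀ x ∈ Ι a b, ‖f x‖ ≤ r) :
    HasSum (fun n : ℕ => ∫ x in a..b, f x ^ n ∂μ) (∫ x in a..b, (1 - f x)⁻¹ ∂μ) := by
  refine hasSum_integral_of_dominated_convergence (fun n _ => r ^ n) (fun n => hf.pow n)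
    (fun n => ae_of_all _ fun x hx => ?_) (ae_of_all _ fun x hx => ?_) intervalIntegrable_const
    (ae_of_all _ fun x hx => hasSum_geometric_of_norm_lt_one ((hfr x hx).trans_lt hr))
  · rw [norm_pow]
    exact pow_le_pow_left₀ (norm_nonneg _) (hfr x hx) n
  · exact summable_geometric_of_lt_one ((norm_nonneg _).trans (hfr x hx)) hr

theorem one_sub_mul_one_sub_pos (x : ℝ) : 0 < 1 - x * (1 - x) := by
  nlinarith [sq_nonneg (2 * x - 1)]

theorem hasDerivAt_arctan_two_mul_sub_one_div_sqrt_three (x : ℝ) :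
    HasDerivAt (fun y => 2 / √3 * arctan ((2 * y - 1) / √3)) (1 - x * (1 - x))⁻¹ x := by
  have hsq : √3 ^ 2 = 3 := sq_sqrt (by norm_num)
  have hinner : HasDerivAt (fun y : ℝ => (2 * y - 1) / √3) (2 / √3) x := by
    simpa using (((hasDerivAt_id x).const_mul 2).sub_const 1).div_const √3
  refine (((hasDerivAt_arctan _).comp x hinner).const_mul (2 / √3)).congr_deriv ?_
  have := (one_sub_mul_one_sub_pos x).ne'
  rw [div_pow, hsq]
  field_simp
  rw [hsq]
  ring

theorem integral_inv_one_sub_mul_one_sub :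
    ∫ x in (0:ℝ)..1, (1 - x * (1 - x))⁻¹ = 2 * π * √3 / 9 := by
  rw [integral_eq_sub_of_hasDerivAt
    (fun x _ => hasDerivAt_arctan_two_mul_sub_one_div_sqrt_three x)
    ((Continuous.inv₀ (by fun_prop) fun x => (one_sub_mul_one_sub_pos x).ne').intervalIntegrable
      _ _)]
  have hsq : √3 ^ 2 = 3 := sq_sqrt (by norm_num)
  norm_num [neg_div, arctan_neg, ← inv_eq_one_div, arctan_inv_sqrt_three]
  field_simp
  linear_combination -6 * hsq

theorem inverse_centralBinom_sum :
    ∑' l : ℕ, (1 : ℝ) / ((2 * (l : ℝ) + 1) * (Nat.centralBinom l : ℝ))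
      = 2 * π * Real.sqrt 3 / 9 := by
  have hquarter : ∀ x ∈ Ι (0:ℝ) 1, ‖x * (1 - x)‖ ≤ 1 / 4 := fun x hx => by
    rw [uIoc_of_le zero_le_one] at hx
    rw [Real.norm_of_nonneg (mul_nonneg hx.1.le (sub_nonneg.2 hx.2))]
    nlinarith [sq_nonneg (2 * x - 1)]
  have hsum := hasSum_intervalIntegral_pow (μ := volume)
    (by fun_prop : Continuous fun x : ℝ => x * (1 - x)).aestronglyMeasurable (by norm_num) hquarter
  rw [← integral_inv_one_sub_mul_one_sub, ← hsum.tsum_eq]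
  refine tsum_congr fun l => ?_
  simp_rw [mul_pow, integral_pow_mul_one_sub_pow_eq_one_div_choose, centralBinom, two_mul]
end

section
/- For every natural number n ≥ 1, ∫ from π/3 to 2π/3 of cos^{2n}θ dθ = (√3 / 4^n) · C(2n-1, n-1) · ∑_{l=n}^∞ 1/((2l+1) C(2l,l)). -/
/-!
Write `I n` for the integral and `R n = √3 C(2n,n) / (2·4^n) · ∑_{l≥n} 1/((2l+1)C(2l,l))`,
which is the right-hand side once `C(2n-1,n-1) = C(2n,n)/2` (n ≥ 1). The reduction formula for
`∫ cos^{2n}` and the ratio `C(2n+2,n+1)/C(2n,n) = 2(2n+1)/(n+1)` give both sequences the same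
recurrence `x (n+1) = (2n+1)/(2n+2) · x n - √3/(4^(n+1) (n+1))`. Hence `e = I - R` satisfies
`e (n+1) = (2n+1)/(2n+2) · e n`, so `|e n|` decays no faster than `2^(-n) |e 0|`; but
`|cos| ≤ 1/2` on `[π/3, 2π/3]` and `C(2l,l) ≥ 4^l/(2l+1)` make both `I n` and `R n` `O(4^(-n))`.
Thus `e 0 = 0`, and then `e n = 0` for every `n`, without ever evaluating the series.
-/

open Real Filter Topology

lemma eq_zero_of_abs_le_mul_abs_succ {e : ℕ → ℝ} {K C q : ℝ} (hK : 0 ≤ K) (hq : 0 ≤ q)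
    (hKq : K * q < 1) (hstep : ∀ n, |e n| ≤ K * |e (n + 1)|) (hbound : ∀ n, |e n| ≤ C * q ^ n) :
    e 0 = 0 := by
  have hgrow : ∀ n, |e 0| ≤ K ^ n * |e n| := by
    intro n
    induction n with
    | zero => simp
    | succ n ih =>
      calc |e 0| ≤ K ^ n * |e n| := ih
        _ ≤ K ^ n * (K * |e (n + 1)|) := by gcongr; exact hstep n
        _ = K ^ (n + 1) * |e (n + 1)| := by ring
  have hle : ∀ n, |e 0| ≤ C * (K * q) ^ n := fun n =>
    calc |e 0| ≤ K ^ n * |e n| := hgrow n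
      _ ≤ K ^ n * (C * q ^ n) := by gcongr; exact hbound n
      _ = C * (K * q) ^ n := by ring
  have hlim : Tendsto (fun n => C * (K * q) ^ n) atTop (𝓝 0) := by
    simpa using (tendsto_pow_atTop_nhds_zero_of_lt_one (by positivity) hKq).const_mul C
  exact abs_nonpos_iff.mp (ge_of_tendsto' hlim hle)

noncomputable def oddCentralBinomTerm (l : ℕ) : ℝ := 1 / ((2 * l + 1) * l.centralBinom)

noncomputable def oddCentralBinomTail (n : ℕ) : ℝ := ∑' l, oddCentralBinomTerm (l + n)

lemma oddCentralBinomTerm_nonneg (l : ℕ) : 0 ≤ oddCentralBinomTerm l := by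
  unfold oddCentralBinomTerm
  positivity

lemma oddCentralBinomTerm_le (l : ℕ) : oddCentralBinomTerm l ≤ (1 / 4) ^ l := by
  have h : (4 : ℝ) ^ l ≤ (2 * l + 1) * l.centralBinom := by
    exact_mod_cast Nat.four_pow_le_two_mul_add_one_mul_central_binom l
  rw [oddCentralBinomTerm, one_div_pow]
  exact one_div_le_one_div_of_le (by positivity) h

lemma summable_oddCentralBinomTerm : Summable oddCentralBinomTerm :=
  .of_nonneg_of_le oddCentralBinomTerm_nonneg oddCentralBinomTerm_le
    (summable_geometric_of_lt_one (by norm_num) (by norm_num))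

lemma oddCentralBinomTail_eq_add_succ (n : ℕ) :
    oddCentralBinomTail n = oddCentralBinomTerm n + oddCentralBinomTail (n + 1) := by
  rw [oddCentralBinomTail,
    ((summable_nat_add_iff n).2 summable_oddCentralBinomTerm).tsum_eq_zero_add,
    oddCentralBinomTail, zero_add]
  simp only [add_right_comm _ 1 n, add_assoc]

lemma oddCentralBinomTail_nonneg (n : ℕ) : 0 ≤ oddCentralBinomTail n :=
  tsum_nonneg fun l => oddCentralBinomTerm_nonneg (l + n)

lemma oddCentralBinomTail_le (n : ℕ) : oddCentralBinomTail n ≤ 4 / 3 * (1 / 4) ^ n := by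
  have hgeom : HasSum (fun l : ℕ => (1 / 4 : ℝ) ^ (l + n)) (4 / 3 * (1 / 4) ^ n) := by
    have := (hasSum_geometric_of_lt_one (r := (1 / 4 : ℝ)) (by norm_num) (by norm_num)).mul_right
      ((1 / 4 : ℝ) ^ n)
    rw [show (1 - 1 / 4 : ℝ)⁻¹ = 4 / 3 by norm_num] at this
    simpa only [← pow_add] using this
  exact hasSum_le (fun l => oddCentralBinomTerm_le (l + n))
    ((summable_nat_add_iff n).2 summable_oddCentralBinomTerm).hasSum hgeom

noncomputable def cosPowIntegral (n : ℕ) : ℝ := ∫ θ in (π / 3)..(2 * π / 3), cos θ ^ (2 * n)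

noncomputable def cosPowClosedForm (n : ℕ) : ℝ :=
  √3 * n.centralBinom / (2 * 4 ^ n) * oddCentralBinomTail n

lemma cosPowIntegral_succ (n : ℕ) :
    cosPowIntegral (n + 1) =
      (2 * n + 1) / (2 * n + 2) * cosPowIntegral n - √3 / (4 ^ (n + 1) * (n + 1)) := by
  have hcos : cos (2 * π / 3) = -(1 / 2) := by
    rw [show 2 * π / 3 = π - π / 3 by ring, cos_pi_sub, cos_pi_div_three]
  have hsin : sin (2 * π / 3) = √3 / 2 := by
    rw [show 2 * π / 3 = π - π / 3 by ring, sin_pi_sub, sin_pi_div_three]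
  have hreduce := integral_cos_pow (a := π / 3) (b := 2 * π / 3) (2 * n)
  have hhalf : (1 / 2 : ℝ) ^ (2 * n + 1) = 1 / (2 * 4 ^ n) := by
    rw [pow_succ, pow_mul, one_div_pow, one_div_pow]; norm_num
  rw [hcos, hsin, cos_pi_div_three, sin_pi_div_three, Odd.neg_pow ⟨n, rfl⟩, hhalf] at hreduce
  rw [cosPowIntegral, cosPowIntegral, mul_add, mul_one, hreduce]
  push_cast
  field_simp
  ring

lemma cos_le_half_of_mem_Icc {x : ℝ} (hx : x ∈ Set.Icc (π / 3) π) : cos x ≤ 1 / 2 :=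
  cos_pi_div_three ▸ cos_le_cos_of_nonneg_of_le_pi (by positivity) hx.2 hx.1

lemma abs_cos_le_half {x : ℝ} (hx : x ∈ Set.Icc (π / 3) (2 * π / 3)) : |cos x| ≤ 1 / 2 := by
  have hπ := pi_pos
  refine abs_le.2 ⟨?_, cos_le_half_of_mem_Icc ⟨hx.1, by linarith [hx.2]⟩⟩
  have := cos_le_half_of_mem_Icc (x := π - x) ⟨by linarith [hx.2], by linarith [hx.1]⟩
  rw [cos_pi_sub] at this
  linarith

lemma abs_cosPowIntegral_le (n : ℕ) : |cosPowIntegral n| ≤ π / 3 * (1 / 4) ^ n := by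
  have hπ := pi_pos
  have hbound : ∀ x ∈ Set.uIoc (π / 3) (2 * π / 3), ‖cos x ^ (2 * n)‖ ≤ (1 / 4 : ℝ) ^ n := by
    intro x hx
    rw [Set.uIoc_of_le (by linarith)] at hx
    calc ‖cos x ^ (2 * n)‖ = |cos x| ^ (2 * n) := by rw [norm_pow, norm_eq_abs]
      _ ≤ (1 / 2) ^ (2 * n) := by gcongr; exact abs_cos_le_half (Set.Ioc_subset_Icc_self hx)
      _ = (1 / 4) ^ n := by rw [pow_mul]; norm_num
  have := intervalIntegral.norm_integral_le_of_norm_le_const hbound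
  rw [norm_eq_abs, abs_of_nonneg (show 0 ≤ 2 * π / 3 - π / 3 by linarith)] at this
  rw [cosPowIntegral]
  linarith

lemma cosPowClosedForm_succ (n : ℕ) :
    cosPowClosedForm (n + 1) =
      (2 * n + 1) / (2 * n + 2) * cosPowClosedForm n - √3 / (4 ^ (n + 1) * (n + 1)) := by
  have hbinom : ((n + 1 : ℕ) : ℝ) * (n + 1).centralBinom = 2 * (2 * n + 1) * n.centralBinom := by
    exact_mod_cast Nat.succ_mul_centralBinom_succ n
  have hB : (0 : ℝ) < n.centralBinom := by exact_mod_cast n.centralBinom_pos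
  push_cast at hbinom
  have hsucc : ((n + 1).centralBinom : ℝ) = 2 * (2 * n + 1) * n.centralBinom / (n + 1) := by
    rw [← hbinom]; field_simp
  rw [cosPowClosedForm, cosPowClosedForm, oddCentralBinomTail_eq_add_succ n, oddCentralBinomTerm,
    hsucc, pow_succ]
  field_simp
  ring

lemma cosPowClosedForm_nonneg (n : ℕ) : 0 ≤ cosPowClosedForm n := by
  have := oddCentralBinomTail_nonneg n
  unfold cosPowClosedForm
  positivity

lemma cosPowClosedForm_le (n : ℕ) : cosPowClosedForm n ≤ 2 * √3 / 3 * (1 / 4) ^ n := by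
  have hB : (n.centralBinom : ℝ) ≤ 4 ^ n := by exact_mod_cast n.centralBinom_le_four_pow
  calc cosPowClosedForm n ≤ √3 * 4 ^ n / (2 * 4 ^ n) * (4 / 3 * (1 / 4) ^ n) := by
        unfold cosPowClosedForm
        gcongr
        · exact oddCentralBinomTail_nonneg n
        · exact oddCentralBinomTail_le n
    _ = 2 * √3 / 3 * (1 / 4) ^ n := by field_simp; ring

theorem cosPowIntegral_eq_cosPowClosedForm (n : ℕ) : cosPowIntegral n = cosPowClosedForm n := by
  set e : ℕ → ℝ := fun k => cosPowIntegral k - cosPowClosedForm k with he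
  have hrec (k : ℕ) : e (k + 1) = (2 * k + 1) / (2 * k + 2) * e k := by
    simp only [he, cosPowIntegral_succ, cosPowClosedForm_succ]; ring
  have hstep (k : ℕ) : |e k| ≤ 2 * |e (k + 1)| := by
    have hratio : (1 / 2 : ℝ) ≤ (2 * k + 1) / (2 * k + 2) := by
      rw [div_le_div_iff₀ (by norm_num) (by positivity)]; linarith
    rw [hrec, abs_mul, abs_of_pos (a := (2 * k + 1 : ℝ) / (2 * k + 2)) (by positivity)]
    nlinarith [abs_nonneg (e k)]
  have hbound (k : ℕ) : |e k| ≤ (π / 3 + 2 * √3 / 3) * (1 / 4) ^ k :=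
    calc |e k| ≤ |cosPowIntegral k| + |cosPowClosedForm k| := abs_sub _ _
      _ ≤ π / 3 * (1 / 4) ^ k + 2 * √3 / 3 * (1 / 4) ^ k := by
        rw [abs_of_nonneg (cosPowClosedForm_nonneg k)]
        exact add_le_add (abs_cosPowIntegral_le k) (cosPowClosedForm_le k)
      _ = (π / 3 + 2 * √3 / 3) * (1 / 4) ^ k := by ring
  have he0 : e 0 = 0 :=
    eq_zero_of_abs_le_mul_abs_succ (by norm_num) (by norm_num) (by norm_num) hstep hbound
  have hen : e n = 0 := by
    induction n with
    | zero => exact he0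
    | succ n ih => rw [hrec, ih, mul_zero]
  exact sub_eq_zero.mp hen

lemma two_mul_choose_two_mul_sub_one (n : ℕ) (hn : 1 ≤ n) :
    2 * (2 * n - 1).choose (n - 1) = n.centralBinom := by
  obtain ⟨m, rfl⟩ : ∃ m, n = m + 1 := ⟨n - 1, by omega⟩
  rw [show 2 * (m + 1) - 1 = 2 * m + 1 by omega, Nat.add_sub_cancel,
    Nat.centralBinom_eq_two_mul_choose, show 2 * (m + 1) = 2 * m + 1 + 1 by ring,
    Nat.choose_succ_succ', Nat.choose_symm_half]
  ring

theorem cos_pow_integral (n : ℕ) (hn : 1 ≤ n) :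
    ∫ θ in (π/3)..(2*π/3), (Real.cos θ) ^ (2 * n)
      = Real.sqrt 3 / 4 ^ n * (Nat.choose (2 * n - 1) (n - 1) : ℝ) *
        ∑' l : ℕ, (1 : ℝ) / ((2 * ((l : ℝ) + (n : ℝ)) + 1) * (Nat.centralBinom (l + n) : ℝ)) := by
  have hchoose : ((2 * n - 1).choose (n - 1) : ℝ) = n.centralBinom / 2 := by
    rw [← two_mul_choose_two_mul_sub_one n hn]; push_cast; ring
  have := cosPowIntegral_eq_cosPowClosedForm n
  rw [cosPowIntegral, cosPowClosedForm, oddCentralBinomTail] at this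
  rw [this, hchoose]
  simp only [oddCentralBinomTerm, Nat.cast_add]
  ring
end

section
/- For real c > 4 and real s, the double integral over (θ₁, θ₂) ∈ [0,1]² of (2cos 2πθ₁ + 2cos 2πθ₂ + c)^s equals c^s · ∑_{j≥0} C(s, 2j) · C(2j,j)² / c^{2j}, where C(s,k) is the generalized binomial coefficient s(s-1)⋯(s-k+1)/k!. -/
open Real

/-- The generalized binomial coefficient `C(s, k) = s (s-1) ⋯ (s-k+1) / k!`. -/
noncomputable def genBinom (s : ℝ) (k : ℕ) : ℝ :=
  (∏ i ∈ Finset.range k, (s - (i : ℝ))) / (Nat.factorial k : ℝ)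

/-!
For `c > 4` the Laurent polynomial `u = 2 cos 2πθ₁ + 2 cos 2πθ₂` satisfies `|u| ≤ 4 < c`, so the
binomial series of `(u + c)^s = c^s (1 + u/c)^s` converges uniformly on the square and may be
integrated term by term. The `k`-th moment of `u` expands by the binomial theorem into products of
one-dimensional moments `∫ (2 cos 2πθ)^m`, which vanish for odd `m` and equal `C(2j, j)` for
`m = 2j` (Wallis' reduction formula). Hence the odd moments of `u` vanish and the `2j`-th one is
`∑ᵢ C(2j, 2i) C(2i, i) C(2j-2i, j-i) = C(2j, j) ∑ᵢ C(j, i)² = C(2j, j)²`, the constant coefficient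
of `(x + x⁻¹ + y + y⁻¹)^{2j}`.
-/

open MeasureTheory Finset

theorem genBinom_eq_ringChoose (s : ℝ) (k : ℕ) : genBinom s k = Ring.choose s k := by
  rw [Ring.choose_eq_smul, ← Polynomial.aeval_eq_smeval, Polynomial.aeval_def,
    Polynomial.eval₂_eq_eval_map, descPochhammer_map, descPochhammer_eval_eq_prod_range, genBinom,
    smul_eq_mul, div_eq_inv_mul]

theorem hasSum_genBinom_mul_pow (s : ℝ) {x : ℝ} (hx : |x| < 1) :
    HasSum (fun k => genBinom s k * x ^ k) ((1 + x) ^ s) := by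
  have := Real.one_add_rpow_hasFPowerSeriesOnBall_zero (a := s) |>.hasSum (y := x)
    (by simpa [edist_dist] using hx)
  simpa [genBinom_eq_ringChoose, binomialSeries, mul_comm] using this

theorem summable_abs_genBinom_mul_pow (s : ℝ) {r : ℝ} (hr0 : 0 ≤ r) (hr : r < 1) :
    Summable (fun k => |genBinom s k| * r ^ k) := by
  lift r to NNReal using hr0
  have := (binomialSeries ℝ s).summable_norm_mul_pow (r := r) ?_
  · simpa [binomialSeries, FormalMultilinearSeries.ofScalars_norm, genBinom_eq_ringChoose]
      using this
  · exact lt_of_lt_of_le (by exact_mod_cast hr) binomialSeries_radius_ge_one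

theorem integral_rpow_add_eq_tsum {α : Type*} [MeasurableSpace α] {μ : Measure α}
    [IsFiniteMeasure μ] {g : α → ℝ} {r c : ℝ} (hg : AEStronglyMeasurable g μ)
    (hgr : ∀ x, |g x| ≤ r) (hr : 0 ≤ r) (hrc : r < c) (s : ℝ) :
    ∫ x, (g x + c) ^ s ∂μ = c ^ s * ∑' k, genBinom s k / c ^ k * ∫ x, g x ^ k ∂μ := by
  have hc : 0 < c := hr.trans_lt hrc
  have hgc : ∀ x, |g x / c| ≤ r / c := fun x => by
    rw [abs_div, abs_of_pos hc]; gcongr; exact hgr x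
  have hrc' : r / c < 1 := (div_lt_one hc).2 hrc
  have hseries : HasSum (fun k => ∫ x, genBinom s k * (g x / c) ^ k ∂μ)
      (∫ x, (1 + g x / c) ^ s ∂μ) := by
    refine hasSum_integral_of_dominated_convergence (fun k _ => |genBinom s k| * (r / c) ^ k)
      (fun k => by fun_prop) (fun k => ae_of_all _ fun x => ?_)
      (ae_of_all _ fun _ => summable_abs_genBinom_mul_pow s (by positivity) hrc')
      (integrable_const _)
      (ae_of_all _ fun x => hasSum_genBinom_mul_pow s ((hgc x).trans_lt hrc'))
    rw [norm_mul, norm_pow, Real.norm_eq_abs, Real.norm_eq_abs]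
    gcongr
    exact hgc x
  have hfactor : ∀ x, (g x + c) ^ s = c ^ s * (1 + g x / c) ^ s := fun x => by
    have : 0 ≤ 1 + g x / c := by linarith [neg_abs_le (g x / c), hgc x]
    rw [← mul_rpow hc.le this, mul_add, mul_one, mul_div_cancel₀ _ hc.ne', add_comm]
  simp_rw [hfactor, integral_const_mul, ← hseries.tsum_eq, ← integral_const_mul, div_pow,
    mul_div_assoc', div_mul_eq_mul_div]

noncomputable def cosMoment (m : ℕ) : ℝ := ∫ θ in (0:ℝ)..1, (2 * cos (2 * π * θ)) ^ m

theorem cosMoment_eq_integral_cos_pow (m : ℕ) :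
    cosMoment m = 2 ^ m * ((2 * π)⁻¹ * ∫ x in (0:ℝ)..2 * π, cos x ^ m) := by
  have h := intervalIntegral.integral_comp_mul_left (a := 0) (b := 1) (fun x => cos x ^ m)
    (mul_ne_zero two_ne_zero pi_ne_zero)
  simp only [mul_zero, mul_one, smul_eq_mul] at h
  rw [cosMoment, ← h, ← intervalIntegral.integral_const_mul]
  simp_rw [mul_pow]

theorem cosMoment_add_two (m : ℕ) :
    cosMoment (m + 2) = 4 * (m + 1) / (m + 2) * cosMoment m := by
  rw [cosMoment_eq_integral_cos_pow, cosMoment_eq_integral_cos_pow, integral_cos_pow]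
  simp only [sin_two_pi, sin_zero, mul_zero, sub_zero, zero_div, zero_add]
  ring

theorem cosMoment_two_mul (j : ℕ) : cosMoment (2 * j) = Nat.centralBinom j := by
  induction j with
  | zero => simp [cosMoment]
  | succ j ih =>
    have hrec : ((j + 1 : ℕ) : ℝ) * Nat.centralBinom (j + 1) =
        2 * (2 * j + 1) * Nat.centralBinom j := by
      exact_mod_cast Nat.succ_mul_centralBinom_succ j
    rw [mul_add_one, cosMoment_add_two, ih]
    push_cast at hrec ⊢
    field_simp
    linear_combination (-2) * hrec

theorem cosMoment_of_odd {m : ℕ} (hm : Odd m) : cosMoment m = 0 := by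
  obtain ⟨j, rfl⟩ := hm
  induction j with
  | zero => simp [cosMoment, intervalIntegral.integral_const_mul]
  | succ j ih => rw [show 2 * (j + 1) + 1 = 2 * j + 1 + 2 by ring, cosMoment_add_two, ih, mul_zero]

theorem Nat.choose_two_mul_mul_centralBinom_mul_centralBinom {i j : ℕ} (hij : i ≤ j) :
    (2 * j).choose (2 * i) * i.centralBinom * (j - i).centralBinom =
      j.centralBinom * j.choose i ^ 2 := by
  have h : ((2 * j).choose (2 * i) * i.centralBinom * (j - i).centralBinom : ℝ) =
      j.centralBinom * j.choose i ^ 2 := by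
    simp only [Nat.centralBinom]
    rw [Nat.cast_choose ℝ (by omega : 2 * i ≤ 2 * j), Nat.cast_choose ℝ (by omega : i ≤ 2 * i),
      Nat.cast_choose ℝ (by omega : j - i ≤ 2 * (j - i)), Nat.cast_choose ℝ (by omega : j ≤ 2 * j),
      Nat.cast_choose ℝ hij, show 2 * j - 2 * i = 2 * (j - i) by omega,
      show 2 * i - i = i by omega, show 2 * (j - i) - (j - i) = j - i by omega,
      show 2 * j - j = j by omega]
    field_simp
  exact_mod_cast h

theorem Nat.sum_choose_two_mul_mul_centralBinom_mul_centralBinom (j : ℕ) :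
    ∑ i ∈ range (j + 1), (2 * j).choose (2 * i) * i.centralBinom * (j - i).centralBinom =
      j.centralBinom ^ 2 := by
  rw [sum_congr rfl fun i hi =>
      Nat.choose_two_mul_mul_centralBinom_mul_centralBinom (mem_range_succ_iff.1 hi),
    ← mul_sum, Nat.sum_range_choose_sq, sq, Nat.centralBinom]

theorem integral_prod_add_pow {α β : Type*} [MeasurableSpace α] [MeasurableSpace β]
    {μ : Measure α} {ν : Measure β} [SFinite μ] [SFinite ν] {f : α → ℝ} {g : β → ℝ}
    (hf : ∀ n : ℕ, Integrable (fun x => f x ^ n) μ) (hg : ∀ n : ℕ, Integrable (fun y => g y ^ n) ν)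
    (k : ℕ) :
    ∫ z, (f z.1 + g z.2) ^ k ∂μ.prod ν =
      ∑ n ∈ range (k + 1), (∫ x, f x ^ n ∂μ) * (∫ y, g y ^ (k - n) ∂ν) * k.choose n := by
  simp_rw [add_pow]
  rw [integral_finsetSum _ fun n _ => ((hf n).mul_prod (hg (k - n))).mul_const _]
  refine sum_congr rfl fun n _ => ?_
  rw [integral_mul_const, integral_prod_mul (fun x => f x ^ n) (fun y => g y ^ (k - n))]

theorem intervalIntegral_intervalIntegral_eq_integral_prod {E : Type*} [NormedAddCommGroup E]
    [NormedSpace ℝ E] {f : ℝ → ℝ → E} (hf : Continuous (Function.uncurry f)) {a b c d : ℝ}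
    (hab : a ≤ b) (hcd : c ≤ d) :
    ∫ x in a..b, ∫ y in c..d, f x y =
      ∫ z, f z.1 z.2 ∂(volume.restrict (Set.Ioc a b)).prod (volume.restrict (Set.Ioc c d)) := by
  simp_rw [intervalIntegral.integral_of_le hab, intervalIntegral.integral_of_le hcd]
  refine integral_integral ?_
  rw [Measure.prod_restrict, ← Measure.volume_eq_prod]
  exact (hf.continuousOn.integrableOn_compact (isCompact_Icc.prod isCompact_Icc)).mono_set
    (Set.prod_mono Set.Ioc_subset_Icc_self Set.Ioc_subset_Icc_self)

theorem tsum_two_mul_eq_tsum_of_odd_eq_zero {M : Type*} [AddCommMonoid M] [TopologicalSpace M]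
    {f : ℕ → M} (hf : ∀ j, f (2 * j + 1) = 0) : ∑' j, f (2 * j) = ∑' k, f k :=
  (mul_right_injective₀ two_ne_zero).tsum_eq fun k hk => by
    obtain ⟨j, rfl | rfl⟩ := Nat.even_or_odd' k
    · exact ⟨j, rfl⟩
    · exact absurd (hf j) hk

local notation "𝕋" =>
  Measure.prod (volume.restrict (Set.Ioc (0:ℝ) 1)) (volume.restrict (Set.Ioc (0:ℝ) 1))

theorem integral_torus_pow (k : ℕ) :
    ∫ z, (2 * cos (2 * π * z.1) + 2 * cos (2 * π * z.2)) ^ k ∂𝕋 =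
      ∑ n ∈ range (k + 1), cosMoment n * cosMoment (k - n) * k.choose n := by
  have hint (n : ℕ) :
      Integrable (fun θ => (2 * cos (2 * π * θ)) ^ n) (volume.restrict (Set.Ioc 0 1)) :=
    (by fun_prop : Continuous _).integrableOn_Ioc
  simp only [integral_prod_add_pow hint hint, cosMoment,
    intervalIntegral.integral_of_le zero_le_one]

theorem integral_torus_pow_odd (j : ℕ) :
    ∫ z, (2 * cos (2 * π * z.1) + 2 * cos (2 * π * z.2)) ^ (2 * j + 1) ∂𝕋 = 0 := by
  rw [integral_torus_pow]
  refine sum_eq_zero fun n hn => ?_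
  rcases Nat.even_or_odd n with ⟨i, rfl⟩ | hn'
  · have : i + i ≤ 2 * j + 1 := mem_range_succ_iff.1 hn
    rw [cosMoment_of_odd (m := 2 * j + 1 - (i + i)) ⟨j - i, by omega⟩, mul_zero, zero_mul]
  · rw [cosMoment_of_odd hn', zero_mul, zero_mul]

theorem integral_torus_pow_two_mul (j : ℕ) :
    ∫ z, (2 * cos (2 * π * z.1) + 2 * cos (2 * π * z.2)) ^ (2 * j) ∂𝕋 = j.centralBinom ^ 2 := by
  rw [integral_torus_pow, ← Nat.cast_pow,
    ← Nat.sum_choose_two_mul_mul_centralBinom_mul_centralBinom]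
  push_cast
  symm
  refine sum_of_injOn (2 * ·) (fun a _ b _ h => by simpa using h) (fun i hi => ?_)
    (fun n hn hn' => ?_) (fun i hi => ?_)
  · simp only [coe_range, Set.mem_Iio] at hi ⊢; omega
  · obtain ⟨i, rfl⟩ | hodd := Nat.even_or_odd n
    · have : i + i ≤ 2 * j := mem_range_succ_iff.1 hn
      exact absurd ⟨i, by simp only [coe_range, Set.mem_Iio]; omega, two_mul i⟩ hn'
    · rw [cosMoment_of_odd hodd, zero_mul, zero_mul]
  · rw [show 2 * j - 2 * i = 2 * (j - i) by omega, cosMoment_two_mul, cosMoment_two_mul]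
    ring

theorem zeta_mahler_four_var (c s : ℝ) (hc : 4 < c) :
    ∫ θ₁ in (0:ℝ)..1, ∫ θ₂ in (0:ℝ)..1,
      (2 * Real.cos (2 * π * θ₁) + 2 * Real.cos (2 * π * θ₂) + c) ^ s
      = c ^ s * ∑' j : ℕ, genBinom s (2 * j) * (Nat.centralBinom j : ℝ) ^ 2 / c ^ (2 * j) := by
  have hbound (z : ℝ × ℝ) : |2 * cos (2 * π * z.1) + 2 * cos (2 * π * z.2)| ≤ 4 := by
    have := abs_cos_le_one (2 * π * z.1)
    have := abs_cos_le_one (2 * π * z.2)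
    calc _ ≤ |2 * cos (2 * π * z.1)| + |2 * cos (2 * π * z.2)| := abs_add_le _ _
      _ ≤ 4 := by simp only [abs_mul, abs_two]; linarith
  have hpos : ∀ z : ℝ × ℝ, 0 < 2 * cos (2 * π * z.1) + 2 * cos (2 * π * z.2) + c :=
    fun z => by linarith [neg_abs_le (2 * cos (2 * π * z.1) + 2 * cos (2 * π * z.2)), hbound z]
  rw [intervalIntegral_intervalIntegral_eq_integral_prod ?_ zero_le_one zero_le_one,
    integral_rpow_add_eq_tsum (by fun_prop) hbound (by norm_num) hc,
    ← tsum_two_mul_eq_tsum_of_odd_eq_zero fun j => by rw [integral_torus_pow_odd, mul_zero]]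
  · simp_rw [integral_torus_pow_two_mul, div_mul_eq_mul_div]
  · exact (by fun_prop : Continuous _).rpow_const fun z => Or.inl (hpos z).ne'
end
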